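/- arXiv:2003.08280 — 8 statements merged into one kernel-verified Lean document; each statement's English description precedes it below -/
import Mathlib

section
/- Let a be a positive integer and let Δ be a set of integers with Δ ⊆ [a, 5a). If card(Δ)/(4a) > 7/8, then every integer i with 5a ≤ 2i and i < 3a can be written as i = j − k with j, k ∈ Δ and j − 2k ≥ a. -/
/-- **Lemma 1.** Let `a` be a positive integer and `Δ` a set of integers with
`Δ ⊆ [a, 5a)`. If `card Δ / (4a) > 7/8` then every integer `i ∈ [5a/2, 3a)`
can be written as `i = j - k` with `j, k ∈ Δ` and `j - 2k ≥ a`. -/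
theorem lemma1_additive_combinatorics (a : ℕ) (ha : 0 < a) (Δ : Finset ℤ)
    (hΔ : ∀ x ∈ Δ, (a : ℤ) ≤ x ∧ x < 5 * (a : ℤ))
    (hcard : (7 : ℚ) / 8 < (Δ.card : ℚ) / (4 * (a : ℚ)))
    (i : ℤ) (hi1 : 5 * (a : ℤ) ≤ 2 * i) (hi2 : i < 3 * (a : ℤ)) :
    ∃ j ∈ Δ, ∃ k ∈ Δ, i = j - k ∧ (a : ℤ) ≤ j - 2 * k := by
  -- Translate the density hypothesis to a cardinality bound
  have hcardN : 7 * a < 2 * Δ.card := by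
    have ha' : (0:ℚ) < 4 * (a:ℚ) := by positivity
    rw [div_lt_div_iff₀ (by norm_num) ha'] at hcard
    have : (7:ℚ) * a < 2 * (Δ.card : ℚ) := by linarith
    exact_mod_cast this
  -- Δ sits inside the interval [a, 5a-1]
  have hΔsub : Δ ⊆ Finset.Icc (a:ℤ) (5*a - 1) := by
    intro x hx
    have := hΔ x hx
    simp only [Finset.mem_Icc]
    omega
  set m : ℤ := min (i - a) (5*a - i - 1) with hm
  set S : Finset ℤ := Finset.Icc (a:ℤ) m with hS
  have hScard : S.card = (m + 1 - a).toNat := by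
    rw [hS, Int.card_Icc]
  have hmlb : a + 1 ≤ 2 * (m + 1 - a) := by
    rcases min_cases (i - a) (5*a - i - 1) with ⟨h1, h2⟩ | ⟨h1, h2⟩ <;> omega
  -- complement
  set C : Finset ℤ := Finset.Icc (a:ℤ) (5*a - 1) \ Δ with hC
  have hCcard : C.card = 4 * a - Δ.card := by
    rw [hC, Finset.card_sdiff_of_subset hΔsub, Int.card_Icc]
    have : ((5*(a:ℤ) - 1) + 1 - a).toNat = 4 * a := by omega
    rw [this]
  have hΔle : Δ.card ≤ 4 * a := by
    have := Finset.card_le_card hΔsub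
    rwa [Int.card_Icc, show ((5*(a:ℤ) - 1) + 1 - a).toNat = 4 * a by omega] at this
  -- bad sets
  set B1 : Finset ℤ := S.filter (fun k => k ∉ Δ) with hB1
  set B2' : Finset ℤ := S.filter (fun k => k ∈ Δ ∧ (i + k) ∉ Δ) with hB2'
  set G : Finset ℤ := S.filter (fun k => k ∈ Δ ∧ (i + k) ∈ Δ) with hG
  have hsplit : B1.card + B2'.card + G.card = S.card := by
    have h1 : B2'.card + G.card = (S.filter (fun k => k ∈ Δ)).card := by
      have h := Finset.card_filter_add_card_filter_not
        (p := fun k => (i + k) ∉ Δ) (s := S.filter (fun k => k ∈ Δ))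
      rw [Finset.filter_filter, Finset.filter_filter] at h
      simp only [not_not] at h
      rw [hB2', hG]
      convert h using 2
    have h2 : B1.card + (S.filter (fun k => k ∈ Δ)).card = S.card := by
      have h := Finset.card_filter_add_card_filter_not
        (p := fun k => k ∈ Δ) (s := S)
      rw [hB1]
      omega
    omega
  -- B1 and shifted B2' are disjoint subsets of C
  set B2 : Finset ℤ := B2'.image (fun k => i + k) with hB2
  have hB2card : B2.card = B2'.card := by
    rw [hB2]
    exact Finset.card_image_of_injective _ (add_right_injective i)
  have hB1C : B1 ⊆ C := by
    intro k hk
    rw [hB1, Finset.mem_filter] at hk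
    obtain ⟨hkS, hkΔ⟩ := hk
    rw [hS, Finset.mem_Icc] at hkS
    rw [hC, Finset.mem_sdiff, Finset.mem_Icc]
    refine ⟨⟨hkS.1, ?_⟩, hkΔ⟩
    have : k ≤ m := hkS.2
    omega
  have hB2C : B2 ⊆ C := by
    intro x hx
    rw [hB2, Finset.mem_image] at hx
    obtain ⟨k, hk, rfl⟩ := hx
    rw [hB2', Finset.mem_filter] at hk
    obtain ⟨hkS, _, hik⟩ := hk
    rw [hS, Finset.mem_Icc] at hkS
    rw [hC, Finset.mem_sdiff, Finset.mem_Icc]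
    have hkm : k ≤ m := hkS.2
    refine ⟨⟨by omega, by omega⟩, hik⟩
  have hdisj : Disjoint B1 B2 := by
    rw [Finset.disjoint_left]
    intro x hx1 hx2
    rw [hB1, Finset.mem_filter] at hx1
    rw [hB2, Finset.mem_image] at hx2
    obtain ⟨k, hk, hkx⟩ := hx2
    rw [hB2', Finset.mem_filter] at hk
    have hx1S := hx1.1
    have hkS := hk.1
    rw [hS, Finset.mem_Icc] at hx1S hkS
    omega
  have hunion : B1.card + B2.card ≤ C.card := by
    rw [← Finset.card_union_of_disjoint hdisj]
    exact Finset.card_le_card (Finset.union_subset hB1C hB2C)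
  -- conclude G is nonempty
  have hGpos : 0 < G.card := by
    have hs : a + 1 ≤ 2 * S.card := by
      rw [hScard]; omega
    omega
  obtain ⟨k, hkG⟩ := Finset.card_pos.mp hGpos
  rw [hG, Finset.mem_filter] at hkG
  obtain ⟨hkS, hkΔ, hikΔ⟩ := hkG
  rw [hS, Finset.mem_Icc] at hkS
  refine ⟨i + k, hikΔ, k, hkΔ, by ring, ?_⟩
  have : k ≤ m := hkS.2
  omega
end

section
/- Let f be a finite measurable function on (X, 𝒳, μ, T). If the set of points x such that B_n f(x) ≤ 0 for all n large enough has positive measure, i.e. if μ[⋃_{N>0} ⋂_{n>N} {B_n f ≤ 0}] > 0, then sup_{n>0} ∑_{i=0}^{n-1} f∘T^i < ∞ μ-almost everywhere on the whole space X. -/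
/-!
Fix `N` such that the set `A` of points with `B_n f ≤ 0` for all `n > N` has positive measure.
By the pointwise ergodic theorem for bounded functions, whose upper bound comes from a
stopping-time covering argument, the visits of a typical orbit to `A` have frequency `μ A > 0`.
So for every large `k` there is a visit time `m ∈ [k / 2, k - N - 1)`, and with `n = k - m - 1`
the window `[m - n, m + n]` ends at `k - 1`; then `T^m y ∈ A` says `S_k ≤ S_{m - n}`, where
`S_k = ∑_{i < k} f ∘ T^i`. Every large partial sum is thus dominated by an earlier one, so the
partial sums are bounded above.
-/

open MeasureTheory Filter Topology

theorem limsup_eq_limsup_of_tendsto_sub {ι : Type*} {l : Filter ι} [l.NeBot] {u v : ι → ℝ}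
    (hu : IsBoundedUnder (· ≤ ·) l u) (hu' : IsBoundedUnder (· ≥ ·) l u)
    (hv : IsBoundedUnder (· ≤ ·) l v) (hv' : IsBoundedUnder (· ≥ ·) l v)
    (h : Tendsto (u - v) l (𝓝 0)) : limsup u l = limsup v l := by
  have key {u v : ι → ℝ} (hv : IsBoundedUnder (· ≤ ·) l v) (hv' : IsBoundedUnder (· ≥ ·) l v)
      (h : Tendsto (u - v) l (𝓝 0)) : limsup u l ≤ limsup v l := by
    calc limsup u l = limsup (v + (u - v)) l := by rw [add_sub_cancel]
      _ ≤ limsup v l + limsup (u - v) l := limsup_add_le hv' hv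
          h.isBoundedUnder_ge.isCoboundedUnder_le h.isBoundedUnder_le
      _ = limsup v l := by rw [h.limsup_eq, add_zero]
  refine le_antisymm (key hv hv' h) (key hu hu' ?_)
  rw [← neg_sub, ← neg_zero]
  exact h.neg

section BirkhoffSum

variable {X : Type*} {τ : X → X} {g : X → ℝ} {C : ℝ}

theorem mul_sub_le_birkhoffSum {c : ℝ} {M : ℕ} (hc : 0 ≤ c) (hg : ∀ x, 0 ≤ g x)
    (h : ∀ x, ∃ n, 0 < n ∧ n ≤ M ∧ c * n ≤ birkhoffSum τ g n x) (L : ℕ) (x : X) :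
    c * (L - M) ≤ birkhoffSum τ g L x := by
  induction L using Nat.strong_induction_on generalizing x with
  | _ L ih =>
  rcases le_or_gt L M with hLM | hML
  · have hL : (L : ℝ) - M ≤ 0 := sub_nonpos.2 (Nat.cast_le.2 hLM)
    exact (mul_nonpos_of_nonneg_of_nonpos hc hL).trans (Finset.sum_nonneg fun i _ => hg _)
  obtain ⟨n, hn, hnM, hcn⟩ := h x
  have hrest := ih (L - n) (by omega) (τ^[n] x)
  rw [← Nat.add_sub_cancel' (hnM.trans hML.le), birkhoffSum_add]
  push_cast [hnM.trans hML.le] at hrest ⊢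
  linarith

theorem measurable_birkhoffSum [MeasurableSpace X] (hτ : Measurable τ) (hg : Measurable g)
    (n : ℕ) : Measurable (birkhoffSum τ g n) :=
  Finset.measurable_sum (f := fun i x => g (τ^[i] x)) _ fun i _ => hg.comp (hτ.iterate i)

theorem birkhoffAverage_nonneg (hg : ∀ x, 0 ≤ g x) (n : ℕ) (x : X) :
    0 ≤ birkhoffAverage ℝ τ g n x :=
  smul_nonneg (by positivity) (Finset.sum_nonneg fun i _ => hg _)

theorem birkhoffAverage_le (hg0 : ∀ x, 0 ≤ g x) (hgC : ∀ x, g x ≤ C) (n : ℕ) (x : X) :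
    birkhoffAverage ℝ τ g n x ≤ C := by
  rcases n.eq_zero_or_pos with rfl | hn
  · simpa using (hg0 x).trans (hgC x)
  have hS : birkhoffSum τ g n x ≤ n * C := by
    simpa [birkhoffSum] using Finset.sum_le_sum fun i (_ : i ∈ Finset.range n) => hgC (τ^[i] x)
  rw [birkhoffAverage, smul_eq_mul, inv_mul_le_iff₀ (by positivity)]
  exact hS

theorem limsup_birkhoffAverage_apply_eq (hg0 : ∀ x, 0 ≤ g x) (hgC : ∀ x, g x ≤ C) (x : X) :
    limsup (fun n => birkhoffAverage ℝ τ g n (τ x)) atTop =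
      limsup (fun n => birkhoffAverage ℝ τ g n x) atTop := by
  have hbdd (y : X) :
      IsBoundedUnder (· ≤ ·) atTop (fun n => birkhoffAverage ℝ τ g n y) ∧
      IsBoundedUnder (· ≥ ·) atTop (fun n => birkhoffAverage ℝ τ g n y) :=
    ⟨isBoundedUnder_of ⟨C, fun n => birkhoffAverage_le hg0 hgC n y⟩,
      isBoundedUnder_of ⟨0, fun n => birkhoffAverage_nonneg hg0 n y⟩⟩
  refine limsup_eq_limsup_of_tendsto_sub (hbdd _).1 (hbdd _).2 (hbdd x).1 (hbdd x).2 ?_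
  refine squeeze_zero_norm (fun n => ?_) (tendsto_const_div_atTop_nhds_zero_nat C)
  rw [Pi.sub_apply, birkhoffAverage_apply_sub_birkhoffAverage, norm_smul, norm_inv,
    Real.norm_natCast, Real.norm_eq_abs, div_eq_inv_mul]
  gcongr
  exact abs_sub_le_of_nonneg_of_le (hg0 _) (hgC _) (hg0 _) (hgC _)

end BirkhoffSum

section ErgodicAverages

variable {X : Type*} [MeasurableSpace X] {μ : Measure X} {τ : X → X} {g : X → ℝ} {C : ℝ}

theorem MeasureTheory.MeasurePreserving.integrable_birkhoffSum (hτ : MeasurePreserving τ μ μ)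
    (hg : Integrable g μ) (n : ℕ) : Integrable (birkhoffSum τ g n) μ :=
  integrable_finsetSum (f := fun i x => g (τ^[i] x)) _ fun i _ =>
    (hτ.iterate i).integrable_comp_of_integrable hg

theorem MeasureTheory.MeasurePreserving.integral_birkhoffSum (hτ : MeasurePreserving τ μ μ)
    (hg : Integrable g μ) (n : ℕ) : ∫ x, birkhoffSum τ g n x ∂μ = n * ∫ x, g x ∂μ := by
  have hcomp (i : ℕ) : ∫ x, g (τ^[i] x) ∂μ = ∫ x, g x ∂μ := by
    have hi := hτ.iterate i
    rw [← integral_map hi.measurable.aemeasurable (hi.map_eq.symm ▸ hg.aestronglyMeasurable),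
      hi.map_eq]
  simp only [birkhoffSum]
  rw [integral_finsetSum (f := fun i x => g (τ^[i] x)) _ fun i _ =>
    (hτ.iterate i).integrable_comp_of_integrable hg]
  simp [hcomp]

variable [IsProbabilityMeasure μ]

theorem MeasureTheory.MeasurePreserving.le_integral_of_forall_exists_le_birkhoffSum
    (hτ : MeasurePreserving τ μ μ) (hg : Integrable g μ) (hg0 : ∀ x, 0 ≤ g x)
    {c : ℝ} {M : ℕ} (hc : 0 ≤ c)
    (h : ∀ x, ∃ n, 0 < n ∧ n ≤ M ∧ c * n ≤ birkhoffSum τ g n x) :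
    c ≤ ∫ x, g x ∂μ := by
  have hL : ∀ L : ℕ, 0 < L → c - c * M / L ≤ ∫ x, g x ∂μ := by
    intro L hL
    have hint : c * (L - M) ≤ L * ∫ x, g x ∂μ := by
      rw [← hτ.integral_birkhoffSum hg L]
      simpa using integral_mono (integrable_const _) (hτ.integrable_birkhoffSum hg L)
        (mul_sub_le_birkhoffSum hc hg0 h L)
    have hL' : (0 : ℝ) < L := Nat.cast_pos.2 hL
    calc c - c * M / L = c * (L - M) / L := by field_simp
      _ ≤ L * (∫ x, g x ∂μ) / L := by gcongr
      _ = ∫ x, g x ∂μ := by field_simp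
  have hlim : Tendsto (fun L : ℕ => c - c * M / L) atTop (𝓝 (c - 0)) :=
    tendsto_const_nhds.sub (tendsto_const_div_atTop_nhds_zero_nat _)
  rw [sub_zero] at hlim
  exact le_of_tendsto hlim ((eventually_gt_atTop 0).mono hL)

theorem MeasureTheory.MeasurePreserving.le_integral_of_ae_exists_le_birkhoffSum
    (hτ : MeasurePreserving τ μ μ) (hgm : Measurable g) (hg : Integrable g μ)
    (hg0 : ∀ x, 0 ≤ g x) {c : ℝ}
    (h : ∀ᵐ x ∂μ, ∃ n, 0 < n ∧ c * n ≤ birkhoffSum τ g n x) :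
    c ≤ ∫ x, g x ∂μ := by
  rcases le_or_gt c 0 with hc | hc
  · exact hc.trans (integral_nonneg hg0)
  set bad : ℕ → Set X := fun M => {x | ∀ n, 0 < n → n ≤ M → birkhoffSum τ g n x < c * n}
  have hbad_meas (M : ℕ) : MeasurableSet (bad M) := by
    simp only [bad, Set.ofPred_forall]
    refine .iInter fun n => .iInter fun _ => .iInter fun _ => measurableSet_lt ?_ measurable_const
    exact measurable_birkhoffSum hτ.measurable hgm n
  have hbad_null : μ (⋂ M, bad M) = 0 := by
    refine measure_mono_null (fun x hx => ?_) (ae_iff.1 h)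
    simp only [Set.mem_iInter, bad] at hx
    simpa using fun n hn => hx n n hn le_rfl
  have hbad_lim : Tendsto (fun M => μ.real (bad M)) atTop (𝓝 0) := by
    have := tendsto_measure_iInter_atTop (fun M => (hbad_meas M).nullMeasurableSet)
      (fun M M' hM x hx n hn hnM => hx n hn (hnM.trans hM)) ⟨0, measure_ne_top μ _⟩
    rw [hbad_null] at this
    exact (ENNReal.tendsto_toReal ENNReal.zero_ne_top).comp this
  -- Raising `g` by `c` on the bad set makes every point good within time `M`.
  have hM (M : ℕ) (hM : 0 < M) : c ≤ ∫ x, g x ∂μ + μ.real (bad M) * c := by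
    set g' := g + (bad M).indicator fun _ => c
    have hind_int : Integrable ((bad M).indicator fun _ => c) μ :=
      (integrable_const c).indicator (hbad_meas M)
    have hgg' : ∀ x, g x ≤ g' x := fun x =>
      le_add_of_nonneg_right (Set.indicator_nonneg (fun _ _ => hc.le) x)
    have hgood : ∀ x, ∃ n, 0 < n ∧ n ≤ M ∧ c * n ≤ birkhoffSum τ g' n x := by
      intro x
      by_cases hx : x ∈ bad M
      · refine ⟨1, one_pos, hM, ?_⟩
        simpa [g', hx] using hg0 x
      · simp only [bad, Set.mem_ofPred_eq, not_forall, not_lt] at hx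
        obtain ⟨n, hn, hnM, hcn⟩ := hx
        exact ⟨n, hn, hnM, hcn.trans (Finset.sum_le_sum fun i _ => hgg' _)⟩
    have := hτ.le_integral_of_forall_exists_le_birkhoffSum (hg.add hind_int)
      (fun x => (hg0 x).trans (hgg' x)) hc.le hgood
    rwa [integral_add' hg hind_int, integral_indicator_const _ (hbad_meas M), smul_eq_mul] at this
  have hlim : Tendsto (fun M => ∫ x, g x ∂μ + μ.real (bad M) * c) atTop
      (𝓝 (∫ x, g x ∂μ + 0 * c)) :=
    tendsto_const_nhds.add (hbad_lim.mul_const c)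
  rw [zero_mul, add_zero] at hlim
  exact ge_of_tendsto hlim ((eventually_gt_atTop 0).mono hM)

theorem Ergodic.ae_limsup_birkhoffAverage_le_integral (hτ : Ergodic τ μ) (hgm : Measurable g)
    (hg0 : ∀ x, 0 ≤ g x) (hgC : ∀ x, g x ≤ C) :
    ∀ᵐ x ∂μ, limsup (fun n => birkhoffAverage ℝ τ g n x) atTop ≤ ∫ x, g x ∂μ := by
  have hψm : Measurable fun x => limsup (fun n => birkhoffAverage ℝ τ g n x) atTop :=
    .limsup fun n => (measurable_birkhoffSum hτ.measurable hgm n).const_smul (n : ℝ)⁻¹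
  obtain ⟨a, ha⟩ := hτ.toPreErgodic.ae_eq_const_of_ae_eq_comp hψm
    (funext (limsup_birkhoffAverage_apply_eq hg0 hgC))
  have hint : Integrable g μ :=
    .of_mem_Icc 0 C hgm.aemeasurable (ae_of_all _ fun x => ⟨hg0 x, hgC x⟩)
  suffices a ≤ ∫ x, g x ∂μ from ha.mono fun x hx => hx.trans_le this
  refine le_of_forall_sub_le fun ε hε => ?_
  refine hτ.toMeasurePreserving.le_integral_of_ae_exists_le_birkhoffSum hgm hint hg0 ?_
  filter_upwards [ha] with x hx
  have hfreq := frequently_lt_of_lt_limsup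
    (isBoundedUnder_of ⟨0, fun n => birkhoffAverage_nonneg (τ := τ) hg0 n x⟩).isCoboundedUnder_le
    (show a - ε < _ by rw [hx, Function.const_apply]; exact sub_lt_self a hε)
  obtain ⟨n, hlt, hn⟩ := (hfreq.and_eventually (eventually_gt_atTop 0)).exists
  refine ⟨n, hn, ?_⟩
  rw [birkhoffAverage, smul_eq_mul, lt_inv_mul_iff₀ (by positivity)] at hlt
  linarith

theorem Ergodic.ae_tendsto_birkhoffAverage (hτ : Ergodic τ μ) (hgm : Measurable g)
    (hg0 : ∀ x, 0 ≤ g x) (hgC : ∀ x, g x ≤ C) :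
    ∀ᵐ x ∂μ, Tendsto (fun n => birkhoffAverage ℝ τ g n x) atTop (𝓝 (∫ x, g x ∂μ)) := by
  have hint : Integrable g μ :=
    .of_mem_Icc 0 C hgm.aemeasurable (ae_of_all _ fun x => ⟨hg0 x, hgC x⟩)
  filter_upwards [hτ.ae_limsup_birkhoffAverage_le_integral hgm hg0 hgC,
    hτ.ae_limsup_birkhoffAverage_le_integral (g := fun x => C - g x) (measurable_const.sub hgm)
      (fun x => sub_nonneg.2 (hgC x)) (fun x => sub_le_self C (hg0 x))] with x hup hlow
  refine tendsto_order.2 ⟨fun b hb => ?_, fun b hb => ?_⟩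
  · have hint_sub : ∫ x, C - g x ∂μ = C - ∫ x, g x ∂μ := by
      simp [integral_sub (integrable_const C) hint]
    have hev := eventually_lt_of_limsup_lt (hlow.trans_lt (hint_sub ▸ sub_lt_sub_left hb C))
      (isBoundedUnder_of ⟨C, fun n => birkhoffAverage_le (fun x => sub_nonneg.2 (hgC x))
        (fun x => sub_le_self C (hg0 x)) n x⟩)
    filter_upwards [hev, eventually_gt_atTop 0] with n hn hn0
    rw [show (fun x => C - g x) = (fun _ => C) - g from rfl, birkhoffAverage_sub, Pi.sub_apply,
      birkhoffAverage_of_comp_eq ℝ (g := fun _ => C) rfl (Nat.cast_pos.2 hn0).ne'] at hn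
    simpa using hn
  · exact eventually_lt_of_limsup_lt (hup.trans_lt hb)
      (isBoundedUnder_of ⟨C, fun n => birkhoffAverage_le hg0 hgC n x⟩)

end ErgodicAverages

theorem bddAbove_range_of_eventually_exists_lt_le {α : Type*} [Preorder α] [IsDirectedOrder α]
    [Nonempty α] {s : ℕ → α} (h : ∀ᶠ k in atTop, ∃ j < k, s k ≤ s j) :
    BddAbove (Set.range s) := by
  obtain ⟨K, hK⟩ := eventually_atTop.1 h
  obtain ⟨b, hb⟩ := ((Set.finite_lt_nat K).image s).bddAbove
  refine ⟨b, Set.forall_mem_range.2 fun k => ?_⟩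
  induction k using Nat.strong_induction_on with
  | _ k ih =>
  rcases lt_or_ge k K with hk | hk
  · exact hb ⟨k, hk, rfl⟩
  · obtain ⟨j, hj, hkj⟩ := hK k hk
    exact hkj.trans (ih j hj)

theorem eventually_exists_mem_Ico_ne_zero {w : ℕ → ℝ} {δ : ℝ} (hδ : 0 < δ)
    (hw : Tendsto (fun n : ℕ => (n : ℝ)⁻¹ * ∑ i ∈ Finset.range n, w i) atTop (𝓝 δ)) (L : ℕ) :
    ∀ᶠ k in atTop, ∃ m ∈ Finset.Ico (k / 2) (k - L), w m ≠ 0 := by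
  -- Partial sums within a factor `1 ± 1/4` of `δ n` cannot stay constant on `[k / 2, k - L)`,
  -- since `5 (k / 2) < 3 (k - L)` for large `k`.
  have hbounds : ∀ᶠ n in atTop,
      3 / 4 * δ * n < ∑ i ∈ Finset.range n, w i ∧ ∑ i ∈ Finset.range n, w i < 5 / 4 * δ * n := by
    filter_upwards [hw.eventually (Ioo_mem_nhds (by linarith : 3 / 4 * δ < δ)
      (by linarith : δ < 5 / 4 * δ)), eventually_gt_atTop 0] with n hn hn0
    have hn0' : (0 : ℝ) < n := Nat.cast_pos.2 hn0
    rw [inv_mul_eq_div, lt_div_iff₀ hn0', div_lt_iff₀ hn0'] at hn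
    exact hn
  obtain ⟨t, ht⟩ := eventually_atTop.1 hbounds
  filter_upwards [eventually_ge_atTop (2 * t + 6 * L + 2)] with k hk
  by_contra! hzero
  have hsum : ∑ i ∈ Finset.range (k - L), w i = ∑ i ∈ Finset.range (k / 2), w i := by
    rw [← Finset.sum_range_add_sum_Ico _ (by omega : k / 2 ≤ k - L),
      Finset.sum_eq_zero hzero, add_zero]
  have hlong := (ht (k - L) (by omega)).1
  have hshort := (ht (k / 2) (by omega)).2
  have hlen : (5 * (k / 2 : ℕ) : ℝ) < 3 * (k - L : ℕ) := by
    exact_mod_cast (by omega : 5 * (k / 2) < 3 * (k - L))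
  nlinarith

theorem bddAbove_range_of_centered_increments_nonpos {s w : ℕ → ℝ} {δ : ℝ} (hδ : 0 < δ)
    (hw : Tendsto (fun n : ℕ => (n : ℝ)⁻¹ * ∑ i ∈ Finset.range n, w i) atTop (𝓝 δ)) (N : ℕ)
    (hs : ∀ m n, w m ≠ 0 → N < n → n ≤ m → s (m + n + 1) ≤ s (m - n)) :
    BddAbove (Set.range s) := by
  refine bddAbove_range_of_eventually_exists_lt_le ?_
  filter_upwards [eventually_exists_mem_Ico_ne_zero hδ hw (N + 1)] with k ⟨m, hm, hwm⟩
  rw [Finset.mem_Ico] at hm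
  refine ⟨m - (k - m - 1), by omega, ?_⟩
  have hmk := hs m (k - m - 1) hwm (by omega) (by omega)
  rwa [show m + (k - m - 1) + 1 = k by omega] at hmk

theorem Finset.sum_Icc_neg_add_natCast {M : Type*} [AddCommGroup M] (F : ℤ → M) {m n : ℕ}
    (hnm : n ≤ m) :
    ∑ i ∈ Finset.Icc (-(n : ℤ)) n, F (i + m) =
      ∑ i ∈ Finset.range (m + n + 1), F i - ∑ i ∈ Finset.range (m - n), F i := by
  rw [Int.Icc_eq_finset_map, Finset.sum_map, show ((n : ℤ) + 1 - -n).toNat = 2 * n + 1 by omega,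
    show m + n + 1 = (m - n) + (2 * n + 1) by omega,
    Finset.sum_range_add (fun i : ℕ => F i) (m - n) (2 * n + 1), add_sub_cancel_left]
  refine Finset.sum_congr rfl fun j _ => congr_arg F ?_
  simp only [Function.Embedding.trans_apply, Nat.castEmbedding_apply, addLeftEmbedding_apply]
  omega

theorem Equiv.Perm.measurable_zpow {X : Type*} [MeasurableSpace X] {T : Equiv.Perm X}
    (hT : Measurable T) (hT' : Measurable T.symm) (i : ℤ) : Measurable ⇑(T ^ i) := by
  obtain ⟨n, rfl | rfl⟩ := Int.eq_nat_or_neg i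
  · rw [zpow_natCast, Equiv.Perm.coe_pow]
    exact hT.iterate n
  · rw [zpow_neg, zpow_natCast, ← inv_pow, Equiv.Perm.coe_pow, Equiv.Perm.inv_def]
    exact hT'.iterate n

theorem Equiv.Perm.sum_Icc_zpow_apply_pow {X M : Type*} [AddCommGroup M] (T : Equiv.Perm X)
    (f : X → M) (y : X) {m n : ℕ} (hnm : n ≤ m) :
    ∑ i ∈ Finset.Icc (-(n : ℤ)) n, f ((T ^ i) ((T ^ m) y)) =
      ∑ i ∈ Finset.range (m + n + 1), f ((T ^ i) y) -
        ∑ i ∈ Finset.range (m - n), f ((T ^ i) y) := by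
  rw [← zpow_natCast T m]
  simp only [← Equiv.Perm.mul_apply, ← zpow_add]
  rw [Finset.sum_Icc_neg_add_natCast (fun j => f ((T ^ j) y)) hnm]
  simp only [zpow_natCast]

theorem lemma2_bilateral_negative_implies_bounded_sums_general
    {X : Type*} [MeasurableSpace X] (μ : Measure X) [IsProbabilityMeasure μ]
    (T : Equiv.Perm X) (hTmeas' : Measurable (⇑T.symm))
    (hT : Ergodic (⇑T) μ)
    (f : X → ℝ) (hf : Measurable f)
    (B : ℕ → X → ℝ)
    (hB : ∀ n x, B n x
      = (2 * (n : ℝ) + 1)⁻¹ * ∑ i ∈ Finset.Icc (-(n : ℤ)) (n : ℤ), f ((T ^ i) x))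
    (hpos : 0 < μ (⋃ N : ℕ, ⋂ n ∈ Set.Ioi N, {x | B n x ≤ 0})) :
    ∀ᵐ x ∂μ, BddAbove (Set.range fun n : ℕ => ∑ i ∈ Finset.range (n + 1), f ((T ^ i) x)) := by
  obtain ⟨N, hN⟩ : ∃ N : ℕ, 0 < μ (⋂ n ∈ Set.Ioi N, {x | B n x ≤ 0}) := by
    by_contra! h
    exact hpos.ne' (measure_iUnion_null fun N => nonpos_iff_eq_zero.1 (h N))
  set A := ⋂ n ∈ Set.Ioi N, {x | B n x ≤ 0}
  have hBm (n : ℕ) : Measurable (B n) := by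
    rw [funext (hB n)]
    exact (Finset.measurable_sum _ fun i _ =>
      hf.comp (Equiv.Perm.measurable_zpow hT.measurable hTmeas' i)).const_mul _
  have hA : MeasurableSet A :=
    .biInter (Set.to_countable _) fun n _ => measurableSet_le (hBm n) measurable_const
  have hδ : 0 < μ.real A := ENNReal.toReal_pos hN.ne' (measure_ne_top μ A)
  filter_upwards [hT.ae_tendsto_birkhoffAverage (measurable_const.indicator hA)
    (Set.indicator_nonneg fun _ _ => zero_le_one) (Set.indicator_le_self' fun _ _ => zero_le_one)]
    with y hy
  rw [integral_indicator_const _ hA, smul_eq_mul, mul_one] at hy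
  refine BddAbove.mono ?_ (bddAbove_range_of_centered_increments_nonpos
    (s := fun k => ∑ i ∈ Finset.range k, f ((T ^ i) y)) hδ hy N ?_)
  · rintro _ ⟨n, rfl⟩
    exact ⟨n + 1, rfl⟩
  intro m n hm hNn hnm
  have hmA : (T ^ m) y ∈ A := by
    rw [Equiv.Perm.coe_pow]
    exact Set.mem_of_indicator_ne_zero hm
  have hwindow := Set.mem_iInter₂.1 hmA n hNn
  rwa [Set.mem_ofPred_eq, hB, inv_mul_le_iff₀ (by positivity), mul_zero,
    Equiv.Perm.sum_Icc_zpow_apply_pow T f y hnm, sub_nonpos] at hwindow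

/-- **Lemma 2.** Let `f` be a finite measurable function on an ergodic invertible
probability-preserving system `(X, μ, T)`. If the set of points `x` such that
`B_n f(x) ≤ 0` for all `n` large enough has positive measure, i.e. if
`μ (⋃_{N>0} ⋂_{n>N} {B_n f ≤ 0}) > 0`, then `sup_{n>0} ∑_{i=0}^{n-1} f ∘ T^i < ∞`
almost everywhere on the whole space `X`. -/
theorem lemma2_bilateral_negative_implies_bounded_sums
    {X : Type*} [MeasurableSpace X] (μ : Measure X) [IsProbabilityMeasure μ]
    (T : Equiv.Perm X) (hTmeas : Measurable (⇑T)) (hTmeas' : Measurable (⇑T.symm))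
    (hT : Ergodic (⇑T) μ)
    (f : X → ℝ) (hf : Measurable f)
    (B : ℕ → X → ℝ)
    (hB : ∀ n x, B n x
      = (2 * (n : ℝ) + 1)⁻¹ * ∑ i ∈ Finset.Icc (-(n : ℤ)) (n : ℤ), f ((T ^ i) x))
    (hpos : 0 < μ (⋃ N : ℕ, ⋂ n ∈ Set.Ioi N, {x | B n x ≤ 0})) :
    ∀ᵐ x ∂μ, BddAbove (Set.range fun n : ℕ => ∑ i ∈ Finset.range (n + 1), f ((T ^ i) x)) :=
  lemma2_bilateral_negative_implies_bounded_sums_general μ T hTmeas' hT f hf B hB hpos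
end

section
/- Let u : X → ℝ be a non-negative measurable function on an ergodic system (X, 𝒳, μ, T) such that √u is integrable. Then (1/n²) ∑_{i=0}^{n-1} u∘T^i converges to 0 μ-almost everywhere. -/
/-!
Put `v = √u`, so that `u ∘ T^i = (v ∘ T^i)^2`, and fix a typical point `x`. The maximal
ergodic lemma bounds the Birkhoff sums `∑_{i<n} v(T^i x) ≤ C n`, and Borel–Cantelli, through
`∑_n μ {v ≥ ε n} ≤ ∫ v / ε + 1`, gives `v(T^n x) = o(n)`. Then
`v(T^i x)^2 = o(i v(T^i x))`, and summing, `∑_{i<n} v(T^i x)^2 = o(n ∑_{i<n} v(T^i x)) = o(n²)`.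
-/

open MeasureTheory Filter Topology Asymptotics Finset

lemma isLittleO_sum_range_sq {a : ℕ → ℝ} {C : ℝ} (ha0 : ∀ i, 0 ≤ a i)
    (hsum : ∀ n : ℕ, ∑ i ∈ range n, a i ≤ C * n) (ho : a =o[atTop] fun n => (n : ℝ)) :
    (fun n => ∑ i ∈ range n, a i ^ 2) =o[atTop] fun n => (n : ℝ) ^ 2 := by
  -- the `+ 1` makes the partial sums of the weights diverge even if `a = 0`
  set b : ℕ → ℝ := fun i => i * a i + 1 with hb
  have hia0 (i : ℕ) : 0 ≤ (i : ℝ) * a i := mul_nonneg i.cast_nonneg (ha0 i)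
  have hb0 : 0 ≤ b := fun i => show 0 ≤ (i : ℝ) * a i + 1 by linarith [hia0 i]
  have hsq : (fun i => a i ^ 2) =o[atTop] b := by
    refine ((ho.mul_isBigO (isBigO_refl a atTop)).congr_left fun i => (sq (a i)).symm)
      |>.trans_isBigO (IsBigO.of_bound 1 (Eventually.of_forall fun i => ?_))
    rw [Real.norm_of_nonneg (hia0 i), Real.norm_of_nonneg (hb0 i)]
    linarith
  have hb_top : Tendsto (fun n => ∑ i ∈ range n, b i) atTop atTop := by
    refine tendsto_atTop_mono (fun n => ?_) tendsto_natCast_atTop_atTop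
    simpa [hb, sum_add_distrib] using sum_nonneg fun i _ => hia0 i
  have hb_sum : (fun n => ∑ i ∈ range n, b i) =O[atTop] fun n => (n : ℝ) ^ 2 := by
    refine IsBigO.of_bound (|C| + 1) (Eventually.of_forall fun n => ?_)
    have hweighted : ∑ i ∈ range n, (i : ℝ) * a i ≤ n * ∑ i ∈ range n, a i := by
      rw [mul_sum]
      exact sum_le_sum fun i hi => mul_le_mul_of_nonneg_right
        (by exact_mod_cast (mem_range.1 hi).le) (ha0 i)
    have hn : (n : ℝ) ≤ (n : ℝ) ^ 2 := by
      rcases n with _ | n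
      · simp
      · push_cast; nlinarith [(n.cast_nonneg : (0 : ℝ) ≤ n)]
    rw [Real.norm_of_nonneg (sum_nonneg fun i _ => hb0 i), Real.norm_of_nonneg (by positivity)]
    simp only [hb, sum_add_distrib, sum_const, card_range, nsmul_eq_mul, mul_one]
    nlinarith [hsum n, le_abs_self C, (n.cast_nonneg : (0 : ℝ) ≤ n)]
  exact (hsq.sum_range hb0 hb_top).trans_isBigO hb_sum

section PartialSups

variable {α : Type*}

lemma partialSups_birkhoffSum_nonneg (f : α → α) (g : α → ℝ) (N : ℕ) (x : α) :
    0 ≤ partialSups (birkhoffSum f g) N x := by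
  simpa [Pi.partialSups_apply] using le_partialSups_of_le (birkhoffSum f g · x) N.zero_le

lemma partialSups_birkhoffSum_le (f : α → α) (g : α → ℝ) (N : ℕ) (x : α) :
    partialSups (birkhoffSum f g) N x ≤ max 0 (g x + partialSups (birkhoffSum f g) N (f x)) := by
  rw [Pi.partialSups_apply]
  refine partialSups_le _ _ _ fun n hn => ?_
  rcases n with _ | n
  · simp
  · rw [birkhoffSum_succ', Pi.partialSups_apply]
    exact le_max_of_le_right <| add_le_add_right
      (le_partialSups_of_le (birkhoffSum f g · (f x)) (show n ≤ N by omega)) _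

end PartialSups

namespace MeasureTheory.MeasurePreserving

variable {α : Type*} [MeasurableSpace α] {μ : Measure α} {f : α → α} {g : α → ℝ}

lemma integrable_birkhoffSum_s5 (hf : MeasurePreserving f μ μ) (hg : Integrable g μ) (n : ℕ) :
    Integrable (birkhoffSum f g n) μ :=
  integrable_finsetSum _ fun i _ => (hf.iterate i).integrable_comp_of_integrable hg

lemma integrable_partialSups_birkhoffSum (hf : MeasurePreserving f μ μ) (hg : Integrable g μ)
    (N : ℕ) : Integrable (partialSups (birkhoffSum f g) N) μ := by
  induction N with
  | zero => simp
  | succ N ih =>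
    rw [show N + 1 = Order.succ N from rfl, partialSups_succ]
    exact ih.sup (hf.integrable_birkhoffSum_s5 hg _)

/-- Hopf's maximal ergodic lemma, with Garsia's proof. -/
lemma setIntegral_partialSups_birkhoffSum_pos_nonneg (hf : MeasurePreserving f μ μ)
    (hg : Integrable g μ) (N : ℕ) :
    0 ≤ ∫ x in {x | 0 < partialSups (birkhoffSum f g) N x}, g x ∂μ := by
  set M := partialSups (birkhoffSum f g) N
  set E := {x | 0 < M x}
  have hM : Integrable M μ := hf.integrable_partialSups_birkhoffSum hg N
  have hMf : Integrable (fun x => M (f x)) μ := hf.integrable_comp_of_integrable hM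
  have hE : NullMeasurableSet E μ := nullMeasurableSet_lt aemeasurable_const hM.aemeasurable
  have hgE := hg.indicator₀ hE
  have hMfE := hMf.indicator₀ hE
  have hpointwise (x : α) : M x ≤ E.indicator g x + E.indicator (fun x => M (f x)) x := by
    by_cases hx : x ∈ E
    · simp only [Set.indicator_of_mem hx]
      exact (le_max_iff.1 (partialSups_birkhoffSum_le f g N x)).resolve_left (not_le.2 hx)
    · simp only [Set.indicator_of_notMem hx, add_zero]
      exact not_lt.1 hx
  have hM_le : ∫ x, M x ∂μ ≤ ∫ x in E, g x ∂μ + ∫ x in E, M (f x) ∂μ := by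
    rw [← integral_indicator₀ hE, ← integral_indicator₀ hE, ← integral_add hgE hMfE]
    exact integral_mono hM (hgE.add hMfE) hpointwise
  have hMf_le : ∫ x in E, M (f x) ∂μ ≤ ∫ x, M x ∂μ := calc
    ∫ x in E, M (f x) ∂μ ≤ ∫ x, M (f x) ∂μ :=
      setIntegral_le_integral hMf
        (Eventually.of_forall fun x => partialSups_birkhoffSum_nonneg f g N (f x))
    _ = ∫ x, M x ∂μ := by
      rw [← integral_map hf.measurable.aemeasurable
        (by rw [hf.map_eq]; exact hM.aestronglyMeasurable), hf.map_eq]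
  linarith

lemma measure_exists_birkhoffSum_gt_le [IsFiniteMeasure μ] (hf : MeasurePreserving f μ μ)
    (hg : Integrable g μ) {c : ℝ} (hc : 0 < c) :
    μ {x | ∃ n : ℕ, c * n < birkhoffSum f g n x} ≤ ENNReal.ofReal ((∫ x, |g x| ∂μ) / c) := by
  set h : α → ℝ := fun x => g x - c
  have hh : Integrable h μ := hg.sub (integrable_const c)
  set E : ℕ → Set α := fun N => {x | 0 < partialSups (birkhoffSum f h) N x}
  have hsub : {x | ∃ n : ℕ, c * n < birkhoffSum f g n x} ⊆ ⋃ N, E N := by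
    rintro x ⟨n, hn⟩
    refine Set.mem_iUnion.2 ⟨n, ?_⟩
    have hS : birkhoffSum f h n x = birkhoffSum f g n x - c * n := by
      simp [h, birkhoffSum, sum_sub_distrib, mul_comm]
    calc 0 < birkhoffSum f h n x := by linarith
      _ ≤ partialSups (birkhoffSum f h) n x := by
        rw [Pi.partialSups_apply]; exact le_partialSups (birkhoffSum f h · x) n
  have hmono : Monotone E := fun N N' hN x hx =>
    hx.trans_le (partialSups_monotone (birkhoffSum f h) hN x)
  have hE (N : ℕ) : μ (E N) ≤ ENNReal.ofReal ((∫ x, |g x| ∂μ) / c) := by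
    have h0 := hf.setIntegral_partialSups_birkhoffSum_pos_nonneg hh N
    rw [integral_sub hg.integrableOn (integrableOn_const (measure_ne_top μ _)), setIntegral_const,
      smul_eq_mul] at h0
    have hgE : ∫ x in E N, g x ∂μ ≤ ∫ x, |g x| ∂μ :=
      (le_abs_self _).trans <| abs_integral_le_integral_abs.trans <|
        setIntegral_le_integral hg.abs (Eventually.of_forall fun x => abs_nonneg _)
    rw [ENNReal.le_ofReal_iff_toReal_le (measure_ne_top μ _) (by positivity), le_div_iff₀ hc]
    have : (μ (E N)).toReal * c ≤ ∫ x in E N, g x ∂μ := by simpa [Measure.real] using h0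
    linarith
  calc μ {x | ∃ n : ℕ, c * n < birkhoffSum f g n x} ≤ μ (⋃ N, E N) := measure_mono hsub
    _ = ⨆ N, μ (E N) := hmono.measure_iUnion
    _ ≤ _ := iSup_le hE

lemma ae_exists_birkhoffSum_le_mul [IsFiniteMeasure μ] (hf : MeasurePreserving f μ μ)
    (hg : Integrable g μ) : ∀ᵐ x ∂μ, ∃ C : ℝ, ∀ n : ℕ, birkhoffSum f g n x ≤ C * n := by
  have hbound (c : ℝ) (hc : 0 < c) : μ {x | ¬∃ C : ℝ, ∀ n : ℕ, birkhoffSum f g n x ≤ C * n} ≤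
      ENNReal.ofReal ((∫ x, |g x| ∂μ) / c) := by
    refine (measure_mono fun x hx => ?_).trans (hf.measure_exists_birkhoffSum_gt_le hg hc)
    push Not at hx
    exact hx c
  have hlim : Tendsto (fun c : ℝ => ENNReal.ofReal ((∫ x, |g x| ∂μ) / c)) atTop (𝓝 0) := by
    simpa using ENNReal.tendsto_ofReal (tendsto_const_nhds.div_atTop tendsto_id)
  exact ae_iff.2 <| nonpos_iff_eq_zero.1 <| ge_of_tendsto hlim <|
    (eventually_gt_atTop 0).mono hbound

lemma ae_isLittleO_comp_iterate [IsProbabilityMeasure μ] (hf : MeasurePreserving f μ μ)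
    {w : α → ℝ} (hw : Integrable w μ) :
    ∀ᵐ x ∂μ, (fun n => w (f^[n] x)) =o[atTop] fun n => (n : ℝ) := by
  have hk (k : ℕ) : ∀ᵐ x ∂μ, ∀ᶠ n in atTop, ((k : ℝ) + 1) * |w (f^[n] x)| ≤ n := by
    set v : α → ℝ := fun y => ((k : ℝ) + 1) * |w y|
    have hv : Integrable v μ := hw.abs.const_mul _
    have hpre (n : ℕ) : μ {x | (n : ℝ) < v (f^[n] x)} = μ {y | v y ∈ Set.Ioi (n : ℝ)} :=
      (hf.iterate n).measure_preimage (nullMeasurableSet_lt aemeasurable_const hv.aemeasurable)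
    have hsum : ∑' n : ℕ, μ {x | (n : ℝ) < v (f^[n] x)} ≠ ⊤ := by
      simp_rw [hpre]
      -- the library states this bound for the `volume` of a `MeasureSpace`; we take `volume = μ`
      exact (@ProbabilityTheory.tsum_prob_mem_Ioi_lt_top α ⟨μ⟩ _ v hv
        fun y => by positivity).ne
    filter_upwards [ae_eventually_notMem hsum] with x hx
    filter_upwards [hx] with n hn using not_lt.1 hn
  filter_upwards [ae_all_iff.2 hk] with x hx
  refine isLittleO_iff.2 fun c hc => ?_
  obtain ⟨k, hkc⟩ := exists_nat_one_div_lt hc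
  filter_upwards [hx k] with n hn
  rw [Real.norm_eq_abs, Real.norm_natCast]
  have hk0 : (0 : ℝ) < k + 1 := by positivity
  calc |w (f^[n] x)| ≤ 1 / (k + 1) * n := by rw [one_div_mul_eq_div, le_div_iff₀ hk0]; linarith
    _ ≤ c * n := by gcongr

end MeasureTheory.MeasurePreserving

theorem sqrt_integrable_implies_quadratic_averages_vanish_general
    {X : Type*} [MeasurableSpace X] (μ : Measure X) [IsProbabilityMeasure μ]
    (T : Equiv.Perm X)
    (hT : Ergodic (⇑T) μ)
    (u : X → ℝ) (hu0 : ∀ x, 0 ≤ u x)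
    (hint : Integrable (fun x => Real.sqrt (u x)) μ) :
    ∀ᵐ x ∂μ,
      Tendsto (fun n : ℕ => ((n : ℝ) ^ 2)⁻¹ * ∑ i ∈ Finset.range n, u ((T ^ i) x))
        atTop (𝓝 0) := by
  have hT' : MeasurePreserving T μ μ := hT.toMeasurePreserving
  filter_upwards [hT'.ae_exists_birkhoffSum_le_mul hint, hT'.ae_isLittleO_comp_iterate hint]
    with x ⟨C, hC⟩ ho
  have hsq (i : ℕ) : u ((T ^ i) x) = √(u (T^[i] x)) ^ 2 := by
    rw [Equiv.Perm.iterate_eq_pow, Real.sq_sqrt (hu0 _)]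
  simp_rw [hsq, ← div_eq_inv_mul]
  exact (isLittleO_sum_range_sq (fun i => Real.sqrt_nonneg _) hC ho).tendsto_div_nhds_zero

/-- Let `u ≥ 0` be a measurable function on an ergodic invertible
probability-preserving system `(X, μ, T)` such that `√u` is integrable. Then
`(1/n²) ∑_{i=0}^{n-1} u ∘ T^i → 0` almost everywhere. -/
theorem sqrt_integrable_implies_quadratic_averages_vanish
    {X : Type*} [MeasurableSpace X] (μ : Measure X) [IsProbabilityMeasure μ]
    (T : Equiv.Perm X) (hTmeas : Measurable (⇑T)) (hTmeas' : Measurable (⇑T.symm))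
    (hT : Ergodic (⇑T) μ)
    (u : X → ℝ) (hu : Measurable u) (hu0 : ∀ x, 0 ≤ u x)
    (hint : Integrable (fun x => Real.sqrt (u x)) μ) :
    ∀ᵐ x ∂μ,
      Tendsto (fun n : ℕ => ((n : ℝ) ^ 2)⁻¹ * ∑ i ∈ Finset.range n, u ((T ^ i) x))
        atTop (𝓝 0) :=
  sqrt_integrable_implies_quadratic_averages_vanish_general μ T hT u hu0 hint
end

section
/- Let a be a positive integer and let Δ be a set of integers with Δ ⊆ [2a, 3a). If card(Δ)/a > 3/4, then every integer i with i ∈ [a/4, a/2) (i.e. a ≤ 4i and 2i < a) can be written as i = j − k with j, k ∈ Δ. -/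
/-- **Lemma 4.** Let `a` be a positive integer and `Δ` a set of integers with
`Δ ⊆ [2a, 3a)`. If `card Δ / a > 3/4` then every integer `i ∈ [a/4, a/2)`
can be written as `i = j - k` with `j, k ∈ Δ`. -/
theorem lemma4_additive_combinatorics (a : ℕ) (ha : 0 < a) (Δ : Finset ℤ)
    (hΔ : ∀ x ∈ Δ, 2 * (a : ℤ) ≤ x ∧ x < 3 * (a : ℤ))
    (hcard : (3 : ℚ) / 4 < (Δ.card : ℚ) / (a : ℚ))
    (i : ℤ) (hi1 : (a : ℤ) ≤ 4 * i) (hi2 : 2 * i < (a : ℤ)) :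
    ∃ j ∈ Δ, ∃ k ∈ Δ, i = j - k := by
  -- 4 * |Δ| > 3 * a
  have ha' : (0 : ℚ) < (a : ℚ) := by exact_mod_cast ha
  have hc : 3 * (a : ℚ) < 4 * (Δ.card : ℚ) := by
    rw [div_lt_div_iff₀ (by norm_num) ha'] at hcard
    linarith
  have hcZ : 3 * (a : ℤ) < 4 * (Δ.card : ℤ) := by exact_mod_cast hc
  set T := Δ.image (· + i) with hT
  have hTcard : T.card = Δ.card := Finset.card_image_of_injective _ (add_left_injective i)
  have hsub : Δ ∪ T ⊆ Finset.Ico (2 * (a : ℤ)) (3 * (a : ℤ) + i) := by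
    intro x hx
    rcases Finset.mem_union.1 hx with hx | hx
    · obtain ⟨h1, h2⟩ := hΔ x hx
      exact Finset.mem_Ico.2 ⟨h1, by linarith⟩
    · obtain ⟨y, hy, rfl⟩ := Finset.mem_image.1 hx
      obtain ⟨h1, h2⟩ := hΔ y hy
      exact Finset.mem_Ico.2 ⟨by linarith, by linarith⟩
  have hIco : (Finset.Ico (2 * (a : ℤ)) (3 * (a : ℤ) + i)).card = ((a : ℤ) + i).toNat := by
    rw [Int.card_Ico]; ring_nf
  have hne : (Δ ∩ T).Nonempty := by
    by_contra h
    rw [Finset.not_nonempty_iff_eq_empty] at h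
    have hu : (Δ ∪ T).card = Δ.card + T.card := by
      rw [Finset.card_union_of_disjoint (Finset.disjoint_iff_inter_eq_empty.2 h)]
    have hle : (Δ ∪ T).card ≤ ((a : ℤ) + i).toNat := hIco ▸ Finset.card_le_card hsub
    have : (Δ.card : ℤ) + Δ.card ≤ (a : ℤ) + i := by
      have h1 : ((Δ ∪ T).card : ℤ) ≤ (((a : ℤ) + i).toNat : ℤ) := by exact_mod_cast hle
      rw [Int.toNat_of_nonneg (by linarith)] at h1
      rw [hu, hTcard] at h1
      push_cast at h1
      linarith
    linarith
  obtain ⟨x, hx⟩ := hne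
  rw [Finset.mem_inter] at hx
  obtain ⟨hxΔ, hxT⟩ := hx
  obtain ⟨y, hy, rfl⟩ := Finset.mem_image.1 hxT
  exact ⟨y + i, hxΔ, y, hy, by ring⟩
end

section
/- Let f be a finite measurable function on (X, 𝒳, μ, T). If sup_{n≥0} |∑_{i=0}^{n} f∘T^i| < +∞ μ-almost everywhere, then there exists a bounded measurable function g : X → ℝ such that f = g − g∘T μ-almost everywhere. -/
open MeasureTheory Filter Topology

/-! Put `g := limsup_n S_n f` with `S_n f = ∑_{k<n} f ∘ T^k`. Where the partial sums are bounded,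
`S_{n+1} f = f + S_n f ∘ T` gives `g = f + g ∘ T`, hence `g - g ∘ T^n = S_n f`, so `g` is bounded
along almost every forward orbit. By ergodicity almost every orbit visits each set `{|g| > K}` of
positive measure, so `g` is essentially bounded, and changing it on a null set makes it bounded. -/

section BirkhoffLimsup

variable {X : Type*} {T : X → X} {φ : X → ℝ}

theorem exists_abs_birkhoffSum_apply_le {x : X} (h : ∃ M, ∀ n, |birkhoffSum T φ n x| ≤ M) :
    ∃ M, ∀ n, |birkhoffSum T φ n (T x)| ≤ M := by
  obtain ⟨M, hM⟩ := h
  refine ⟨M + |φ x|, fun n => ?_⟩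
  have hshift : birkhoffSum T φ n (T x) = birkhoffSum T φ (n + 1) x - φ x := by
    rw [birkhoffSum_succ']; ring
  rw [hshift]
  linarith [abs_sub (birkhoffSum T φ (n + 1) x) (φ x), hM (n + 1)]

variable (T φ) in
noncomputable def birkhoffLimsup (x : X) : ℝ :=
  limsup (fun n => birkhoffSum T φ n x) atTop

theorem birkhoffLimsup_apply {x : X} (h : ∃ M, ∀ n, |birkhoffSum T φ n (T x)| ≤ M) :
    birkhoffLimsup T φ x = φ x + birkhoffLimsup T φ (T x) := by
  obtain ⟨M, hM⟩ := h
  have hle : IsBoundedUnder (· ≤ ·) atTop fun n => birkhoffSum T φ n (T x) :=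
    isBoundedUnder_of ⟨M, fun n => (le_abs_self _).trans (hM n)⟩
  have hge : IsBoundedUnder (· ≥ ·) atTop fun n => birkhoffSum T φ n (T x) :=
    isBoundedUnder_of ⟨-M, fun n => neg_le_of_abs_le (hM n)⟩
  calc birkhoffLimsup T φ x = limsup (fun n => birkhoffSum T φ (n + 1) x) atTop :=
        (limsup_nat_add (fun n => birkhoffSum T φ n x) 1).symm
    _ = limsup (fun n => φ x + birkhoffSum T φ n (T x)) atTop := by
        simp only [birkhoffSum_succ']
    _ = φ x + birkhoffLimsup T φ (T x) :=
        limsup_const_add atTop _ _ hle hge.isCoboundedUnder_le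

theorem birkhoffLimsup_sub_birkhoffLimsup_iterate {x : X}
    (h : ∃ M, ∀ n, |birkhoffSum T φ n x| ≤ M) (n : ℕ) :
    birkhoffLimsup T φ x - birkhoffLimsup T φ (T^[n] x) = birkhoffSum T φ n x := by
  induction n generalizing x with
  | zero => simp
  | succ n ih =>
    have hTx := exists_abs_birkhoffSum_apply_le h
    rw [Function.iterate_succ_apply, birkhoffSum_succ', birkhoffLimsup_apply hTx, ← ih hTx]
    ring

theorem measurable_birkhoffLimsup [MeasurableSpace X] (hT : Measurable T) (hφ : Measurable φ) :
    Measurable (birkhoffLimsup T φ) :=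
  Measurable.limsup fun _ => Finset.measurable_sum _ fun k _ => hφ.comp (hT.iterate k)

end BirkhoffLimsup

section Ergodic

variable {X : Type*} [MeasurableSpace X] {μ : Measure X} [IsFiniteMeasure μ] {T : X → X}

theorem Ergodic.ae_exists_iterate_mem (hT : Ergodic T μ) {s : Set X} (hs : MeasurableSet s)
    (hμs : μ s ≠ 0) : ∀ᵐ x ∂μ, ∃ n, T^[n] x ∈ s := by
  set U := ⋃ n, T^[n] ⁻¹' s
  have hU : MeasurableSet U := .iUnion fun n => hT.measurable.iterate n hs
  have hTU : T ⁻¹' U ⊆ U := by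
    simp only [U, Set.preimage_iUnion, ← Set.preimage_comp, ← Function.iterate_succ]
    exact Set.iUnion_subset fun n => Set.subset_iUnion (fun n => T^[n] ⁻¹' s) (n + 1)
  rcases hT.ae_empty_or_univ_of_preimage_ae_le hU.nullMeasurableSet hTU.eventuallyLE with
    hempty | huniv
  · have hsU : s ⊆ U := Set.subset_iUnion (fun n => T^[n] ⁻¹' s) 0
    exact absurd (measure_mono_null hsU (measure_congr hempty |>.trans measure_empty)) hμs
  · filter_upwards [mem_ae_iff.2 (ae_eq_univ.1 huniv)] with x hx
    simpa [U] using hx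

theorem Ergodic.exists_ae_abs_le_of_ae_bdd_orbit (hT : Ergodic T μ) {g : X → ℝ}
    (hg : Measurable g) (horbit : ∀ᵐ x ∂μ, ∃ M, ∀ n, |g (T^[n] x)| ≤ M) :
    ∃ C, ∀ᵐ x ∂μ, |g x| ≤ C := by
  by_contra! hunbdd
  have hvisit : ∀ᵐ x ∂μ, ∀ K : ℕ, ∃ n, (K : ℝ) < |g (T^[n] x)| := by
    refine ae_all_iff.2 fun K => hT.ae_exists_iterate_mem (measurableSet_lt measurable_const hg.abs) ?_
    exact frequently_ae_iff.1 (hunbdd K)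
  obtain ⟨x, -, ⟨M, hM⟩, hx⟩ := ((hunbdd 0).and_eventually (horbit.and hvisit)).exists
  obtain ⟨n, hn⟩ := hx ⌈M⌉₊
  linarith [hM n, Nat.le_ceil M]

end Ergodic

theorem exists_measurable_bounded_ae_eq {X : Type*} [MeasurableSpace X] {μ : Measure X}
    {g : X → ℝ} (hg : Measurable g) {C : ℝ} (hC : ∀ᵐ x ∂μ, |g x| ≤ C) :
    ∃ g' : X → ℝ, Measurable g' ∧ (∃ C, ∀ x, |g' x| ≤ C) ∧ g' =ᵐ[μ] g := by
  set s := {x | |g x| ≤ C}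
  refine ⟨s.indicator g, hg.indicator (measurableSet_le hg.abs measurable_const), ⟨|C|, ?_⟩,
    ?_⟩
  · intro x
    by_cases hx : x ∈ s
    · simpa [hx] using (show |g x| ≤ C from hx).trans (le_abs_self C)
    · simp [hx]
  · filter_upwards [hC] with x hx
    simp [s, hx]

theorem bounded_partial_sums_implies_bounded_coboundary_general
    {X : Type*} [MeasurableSpace X] (μ : Measure X) [IsProbabilityMeasure μ]
    (T : Equiv.Perm X)
    (hT : Ergodic (⇑T) μ)
    (f : X → ℝ) (hf : Measurable f)
    (hbdd : ∀ᵐ x ∂μ, BddAbove (Set.range fun n : ℕ =>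
      |∑ i ∈ Finset.range (n + 1), f ((T ^ i) x)|)) :
    ∃ g : X → ℝ, Measurable g ∧ (∃ C : ℝ, ∀ x, |g x| ≤ C) ∧
      ∀ᵐ x ∂μ, f x = g x - g (T x) := by
  have hS : ∀ᵐ x ∂μ, ∃ M, ∀ n, |birkhoffSum T f n x| ≤ M := by
    filter_upwards [hbdd] with x ⟨M, hM⟩
    have hM' : ∀ n, |birkhoffSum T f (n + 1) x| ≤ M := fun n => hM ⟨n, rfl⟩
    refine ⟨M, fun n => ?_⟩
    cases n with
    | zero => simpa using (abs_nonneg _).trans (hM' 0)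
    | succ n => exact hM' n
  set G := birkhoffLimsup T f
  have horbit : ∀ᵐ x ∂μ, ∃ M, ∀ n, |G (T^[n] x)| ≤ M := by
    filter_upwards [hS] with x hx
    obtain ⟨M, hM⟩ := hx
    refine ⟨|G x| + M, fun n => ?_⟩
    rw [← sub_sub_cancel (G x) (G _), birkhoffLimsup_sub_birkhoffLimsup_iterate ⟨M, hM⟩]
    linarith [abs_sub (G x) (birkhoffSum T f n x), hM n]
  have hG := measurable_birkhoffLimsup hT.measurable hf
  obtain ⟨C, hC⟩ := hT.exists_ae_abs_le_of_ae_bdd_orbit hG horbit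
  obtain ⟨g, hg, hgC, hgG⟩ := exists_measurable_bounded_ae_eq hG hC
  have hgGT : g ∘ T =ᵐ[μ] G ∘ T := hT.quasiMeasurePreserving.ae_eq_comp hgG
  refine ⟨g, hg, hgC, ?_⟩
  filter_upwards [hS, hgG, hgGT] with x hx hgx hgTx
  rw [hgx, show g (T x) = G (T x) from hgTx, birkhoffLimsup_apply (exists_abs_birkhoffSum_apply_le hx)]
  ring

/-- Let `f` be a finite measurable function on an ergodic invertible
probability-preserving system `(X, μ, T)`. If `sup_{n≥0} |∑_{i=0}^n f ∘ T^i| < +∞`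
almost everywhere, then `f` is a bounded coboundary: there is a bounded measurable
function `g` with `f = g - g ∘ T` almost everywhere. -/
theorem bounded_partial_sums_implies_bounded_coboundary
    {X : Type*} [MeasurableSpace X] (μ : Measure X) [IsProbabilityMeasure μ]
    (T : Equiv.Perm X) (hTmeas : Measurable (⇑T)) (hTmeas' : Measurable (⇑T.symm))
    (hT : Ergodic (⇑T) μ)
    (f : X → ℝ) (hf : Measurable f)
    (hbdd : ∀ᵐ x ∂μ, BddAbove (Set.range fun n : ℕ =>
      |∑ i ∈ Finset.range (n + 1), f ((T ^ i) x)|)) :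
    ∃ g : X → ℝ, Measurable g ∧ (∃ C : ℝ, ∀ x, |g x| ≤ C) ∧
      ∀ᵐ x ∂μ, f x = g x - g (T x) :=
  bounded_partial_sums_implies_bounded_coboundary_general μ T hT f hf hbdd
end

section
/- Let f be a finite measurable function on (X, 𝒳, μ, T). If sup_{n≥0} |∑_{i=-n}^{n} f∘T^i| < +∞ almost everywhere on a set of positive measure, then there exists a bounded measurable function g : X → ℝ such that f = g − g∘T μ-almost everywhere. -/
/-!
Write `Φ n x` for the two-sided Birkhoff sums of `f`, so that
`Φ (m + n) x = Φ m x + Φ n (T^m x)` and `∑_{i=-n}^{n} f (T^i y) = Φ (n+1) y - Φ (-n) y`. Fix `C`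
such that the set `A` of points with all bilateral sums bounded by `C` has positive measure.
If `T^k x ∈ A`, then `Φ · x` is symmetric up to `C` about `k + 1/2`; two such reflections, at `k`
and `k + s`, compose to a translation by `2s` that moves `Φ · x` by at most `2C`. By ergodicity
the return times `s` of `A` (those with `μ (A ∩ T^{-s} A) > 0`) have bounded gaps, and for each
of them almost every orbit visits `A ∩ T^{-s} A`. Bounded gaps turn the resulting family of
almost-invariances into boundedness of `Φ · x` for almost every `x`. Then `g x = sup_n Φ n x`
solves `f = g - g ∘ T`, and `g` is bounded because it is dominated by the oscillation
`sup_{m,n} (Φ m x - Φ n x)`, a `T`-invariant function and hence almost everywhere constant.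
-/

open MeasureTheory Filter Topology

lemma abs_sub_one_sub_le_of_forall_nat {u : ℤ → ℝ} {C : ℝ}
    (h : ∀ n : ℕ, |u (n + 1) - u (-n)| ≤ C) (a : ℤ) : |u a - u (1 - a)| ≤ C := by
  rcases le_or_gt a 0 with ha | ha
  · have h' := h (-a).toNat
    rwa [Int.toNat_of_nonneg (by omega), neg_neg, abs_sub_comm, add_comm, ← sub_eq_add_neg] at h'
  · have h' := h (a - 1).toNat
    rwa [Int.toNat_of_nonneg (by omega), sub_add_cancel, neg_sub] at h'

lemma abs_sub_add_two_mul_sub_le {u : ℤ → ℝ} {C : ℝ} {k l : ℤ}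
    (hk : ∀ a, |u (k + a) - u (k + 1 - a)| ≤ C) (hl : ∀ a, |u (l + a) - u (l + 1 - a)| ≤ C)
    (b : ℤ) : |u b - u (b + 2 * (l - k))| ≤ 2 * C := by
  have h₁ := hk (b - k)
  have h₂ := hl (b + l - 2 * k)
  rw [add_sub_cancel] at h₁
  rw [show l + (b + l - 2 * k) = b + 2 * (l - k) by ring,
    show l + 1 - (b + l - 2 * k) = k + 1 - (b - k) by ring, abs_sub_comm] at h₂
  linarith [abs_sub_le (u b) (u (k + 1 - (b - k))) (u (b + 2 * (l - k)))]

lemma bddAbove_range_of_abs_le {ι : Type*} {u : ι → ℝ} {B : ℝ} (h : ∀ i, |u i| ≤ B) :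
    BddAbove (Set.range u) :=
  ⟨B, by rintro _ ⟨i, rfl⟩; exact (le_abs_self _).trans (h i)⟩

section BoundedShifts

variable {G : Type*} [AddGroup G]

def boundedShifts (u : G → ℝ) : AddSubgroup G where
  carrier := {z | ∃ K, ∀ a, |u a - u (a + z)| ≤ K}
  zero_mem' := ⟨0, by simp⟩
  add_mem' := by
    rintro z w ⟨K, hK⟩ ⟨L, hL⟩
    refine ⟨K + L, fun a => ?_⟩
    rw [← add_assoc]
    exact (abs_sub_le _ (u (a + z)) _).trans (add_le_add (hK a) (hL (a + z)))
  neg_mem' := by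
    rintro z ⟨K, hK⟩
    refine ⟨K, fun a => ?_⟩
    simpa [abs_sub_comm] using hK (a + -z)

lemma exists_bound_of_finite_subset_boundedShifts {u : G → ℝ} {F : Set G} (hF : F.Finite)
    (hFu : F ⊆ boundedShifts u) : ∃ K, ∀ z ∈ F, ∀ a, |u a - u (a + z)| ≤ K := by
  choose! K hK using show ∀ z ∈ F, ∃ K, ∀ a, |u a - u (a + z)| ≤ K from hFu
  obtain ⟨B, hB⟩ := (hF.image K).bddAbove
  exact ⟨B, fun z hz a => (hK z hz a).trans (hB ⟨z, hz, rfl⟩)⟩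

end BoundedShifts

/-- The bound extends uniformly to the subgroup `boundedShifts u`, which contains some `p > 0`:
each of its elements differs from some shift `s` by one of the finitely many elements of
`boundedShifts u ∩ [-N, N]`. -/
lemma exists_forall_abs_le_of_syndetic_shifts {u : ℤ → ℝ} {N : ℕ} {c : ℝ}
    (hu : ∀ t : ℤ, ∃ s, |s - t| ≤ N ∧ ∀ a, |u a - u (a + s)| ≤ c) :
    ∃ B, ∀ a, |u a| ≤ B := by
  set Z := boundedShifts u
  obtain ⟨K, hK⟩ := exists_bound_of_finite_subset_boundedShifts
    ((Set.finite_Icc (-(N : ℤ)) N).inter_of_left Z) Set.inter_subset_right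
  have hZ : ∀ z ∈ Z, ∀ a, |u a - u (a + z)| ≤ c + K := by
    intro z hz a
    obtain ⟨s, hsz, hs⟩ := hu z
    have hr : z - s ∈ Set.Icc (-(N : ℤ)) N ∩ Z :=
      ⟨abs_le.1 (by rwa [abs_sub_comm]), Z.sub_mem hz ⟨c, hs⟩⟩
    have h := abs_sub_le (u a) (u (a + s)) (u (a + s + (z - s)))
    have hr' := hK _ hr (a + s)
    rw [add_add_sub_cancel] at h hr'
    linarith [hs a]
  obtain ⟨p, hpN, hp⟩ := hu (N + 1)
  have hp0 : 0 < p := by linarith [(abs_le.1 hpN).1]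
  obtain ⟨B, hB⟩ := ((Set.finite_Ico 0 p).image fun j => |u j|).bddAbove
  refine ⟨B + (c + K), fun a => ?_⟩
  have h := hZ (p * (a / p)) (by simpa [mul_comm] using Z.zsmul_mem ⟨c, hp⟩ (a / p)) (a % p)
  rw [Int.emod_add_mul_ediv] at h
  have hj := hB ⟨a % p, ⟨Int.emod_nonneg a hp0.ne', Int.emod_lt_of_pos a hp0⟩, rfl⟩
  linarith [abs_sub_abs_le_abs_sub (u a) (u (a % p)), abs_sub_comm (u a) (u (a % p))]

namespace Equiv.Perm

section BirkhoffSumZ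

variable {α M : Type*} [AddCommGroup M]

noncomputable def birkhoffSumZ (T : Equiv.Perm α) (g : α → M) (n : ℤ) (x : α) : M :=
  ∑ i ∈ Finset.Ico 0 n, g ((T ^ i) x) - ∑ i ∈ Finset.Ico n 0, g ((T ^ i) x)

variable (T : Equiv.Perm α) (g : α → M)

@[simp] lemma birkhoffSumZ_zero (x : α) : T.birkhoffSumZ g 0 x = 0 := by
  simp [birkhoffSumZ]

lemma birkhoffSumZ_add_one (n : ℤ) (x : α) :
    T.birkhoffSumZ g (n + 1) x = T.birkhoffSumZ g n x + g ((T ^ n) x) := by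
  rcases le_or_gt 0 n with hn | hn
  · simp [birkhoffSumZ, ← Finset.sum_Ico_add_eq_sum_Ico_add_one hn, Finset.Ico_eq_empty_of_le,
      hn, Int.le_add_one hn]
  · rw [birkhoffSumZ, birkhoffSumZ, Finset.Ico_eq_empty_of_le (by omega : 0 ≥ n + 1),
      Finset.Ico_eq_empty_of_le hn.le, ← Finset.insert_Ico_add_one_left_eq_Ico hn,
      Finset.sum_insert (by simp)]
    abel

@[simp] lemma birkhoffSumZ_one (x : α) : T.birkhoffSumZ g 1 x = g x := by
  simpa using T.birkhoffSumZ_add_one g 0 x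

lemma birkhoffSumZ_add (m n : ℤ) (x : α) :
    T.birkhoffSumZ g (m + n) x = T.birkhoffSumZ g m x + T.birkhoffSumZ g n ((T ^ m) x) := by
  have shift (k : ℤ) : (T ^ k) ((T ^ m) x) = (T ^ (m + k)) x := by
    rw [← mul_apply, ← zpow_add, add_comm]
  induction n using Int.induction_on with
  | zero => simp
  | succ n ih =>
    rw [← add_assoc, birkhoffSumZ_add_one, ih, birkhoffSumZ_add_one, shift, add_assoc]
  | pred n ih =>
    have h₁ := T.birkhoffSumZ_add_one g (m + (-n - 1)) x
    have h₂ := T.birkhoffSumZ_add_one g (-n - 1) ((T ^ m) x)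
    rw [add_assoc, sub_add_cancel, ih] at h₁
    rw [sub_add_cancel] at h₂
    rw [h₂, shift, ← add_assoc] at h₁
    exact (add_right_cancel h₁).symm

lemma birkhoffSumZ_one_add (n : ℤ) (x : α) :
    T.birkhoffSumZ g (1 + n) x = g x + T.birkhoffSumZ g n (T x) := by
  rw [birkhoffSumZ_add, birkhoffSumZ_one, zpow_one]

lemma sum_Ico_eq_birkhoffSumZ_sub {a b : ℤ} (hab : a ≤ b) (x : α) :
    ∑ i ∈ Finset.Ico a b, g ((T ^ i) x) = T.birkhoffSumZ g b x - T.birkhoffSumZ g a x := by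
  induction b, hab using Int.leInduction with
  | base => simp
  | succ b hab ih =>
    rw [← Finset.sum_Ico_add_eq_sum_Ico_add_one hab, ih, birkhoffSumZ_add_one]
    abel

lemma sum_Icc_neg_eq_birkhoffSumZ_sub (n : ℕ) (x : α) :
    ∑ i ∈ Finset.Icc (-(n : ℤ)) n, g ((T ^ i) x) =
      T.birkhoffSumZ g (n + 1) x - T.birkhoffSumZ g (-n) x := by
  rw [← Finset.Ico_add_one_right_eq_Icc, sum_Ico_eq_birkhoffSumZ_sub _ _ (by omega)]

end BirkhoffSumZ

section Real

variable {α : Type*} {T : Equiv.Perm α} {f : α → ℝ}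

lemma iSup_birkhoffSumZ_apply_eq_sub (x : α)
    (hx : BddAbove (Set.range fun m => T.birkhoffSumZ f m x)) :
    ⨆ m, T.birkhoffSumZ f m (T x) = (⨆ m, T.birkhoffSumZ f m x) - f x := by
  have hx' : BddAbove (Set.range fun m => T.birkhoffSumZ f (1 + m) x) :=
    hx.mono (Set.range_comp_subset_range (1 + ·) fun m => T.birkhoffSumZ f m x)
  simp_rw [eq_sub_of_add_eq' (birkhoffSumZ_one_add T f _ x).symm, ← ciSup_sub hx']
  exact congrArg (· - f x) ((Equiv.addLeft 1).iSup_comp (g := fun m => T.birkhoffSumZ f m x))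

noncomputable def birkhoffOscillation (T : Equiv.Perm α) (f : α → ℝ) (x : α) : ℝ :=
  ⨆ (m : ℤ) (n : ℤ), (T.birkhoffSumZ f m x - T.birkhoffSumZ f n x)

lemma birkhoffOscillation_apply (x : α) :
    T.birkhoffOscillation f (T x) = T.birkhoffOscillation f x := by
  simp_rw [birkhoffOscillation, eq_sub_of_add_eq' (birkhoffSumZ_one_add T f _ x).symm,
    sub_sub_sub_cancel_right]
  calc ⨆ (m) (n), (T.birkhoffSumZ f (1 + m) x - T.birkhoffSumZ f (1 + n) x)
      = ⨆ (m) (n), (T.birkhoffSumZ f (1 + m) x - T.birkhoffSumZ f n x) :=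
        iSup_congr fun m => (Equiv.addLeft 1).iSup_comp
          (g := fun n => T.birkhoffSumZ f (1 + m) x - T.birkhoffSumZ f n x)
    _ = ⨆ (m) (n), (T.birkhoffSumZ f m x - T.birkhoffSumZ f n x) :=
        (Equiv.addLeft 1).iSup_comp
          (g := fun m => ⨆ n, T.birkhoffSumZ f m x - T.birkhoffSumZ f n x)

lemma iSup_birkhoffSumZ_le_birkhoffOscillation {x : α} {B : ℝ}
    (hB : ∀ a, |T.birkhoffSumZ f a x| ≤ B) :
    ⨆ m, T.birkhoffSumZ f m x ≤ T.birkhoffOscillation f x := by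
  have hdiff (m n : ℤ) : T.birkhoffSumZ f m x - T.birkhoffSumZ f n x ≤ B + B := by
    linarith [abs_le.1 (hB m), abs_le.1 (hB n)]
  refine ciSup_le fun m => le_ciSup_of_le ?_ m ?_
  · exact ⟨B + B, by rintro _ ⟨m, rfl⟩; exact ciSup_le (hdiff m)⟩
  · simpa using le_ciSup (f := fun n => T.birkhoffSumZ f m x - T.birkhoffSumZ f n x)
      ⟨B + B, by rintro _ ⟨n, rfl⟩; exact hdiff m n⟩ 0

/-- Since `Φ (n + 1) y - Φ (-n) y = ∑_{i=-n}^{n} f (T^i y)`, these are the points whose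
bilateral sums are all bounded by `C`. -/
def reflectionSet (T : Equiv.Perm α) (f : α → ℝ) (C : ℝ) : Set α :=
  {y | ∀ a : ℤ, |T.birkhoffSumZ f a y - T.birkhoffSumZ f (1 - a) y| ≤ C}

lemma abs_birkhoffSumZ_sub_le_of_zpow_apply_mem_reflectionSet {C : ℝ} {k : ℤ} {x : α}
    (hx : (T ^ k) x ∈ T.reflectionSet f C) (a : ℤ) :
    |T.birkhoffSumZ f (k + a) x - T.birkhoffSumZ f (k + 1 - a) x| ≤ C := by
  rw [add_sub_assoc, birkhoffSumZ_add, birkhoffSumZ_add, add_sub_add_left_eq_sub]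
  exact hx a

end Real

lemma preimage_iUnion_zpow_preimage {X : Type*} (T : Equiv.Perm X) (s : Set X) :
    T ⁻¹' ⋃ k : ℤ, (T ^ k) ⁻¹' s = ⋃ k : ℤ, (T ^ k) ⁻¹' s := by
  ext x
  simp only [Set.mem_preimage, Set.mem_iUnion]
  constructor
  · rintro ⟨k, hk⟩
    exact ⟨k + 1, by rwa [zpow_add_one, mul_apply]⟩
  · rintro ⟨k, hk⟩
    exact ⟨k - 1, by rwa [← mul_apply, ← zpow_add_one, sub_add_cancel]⟩

section Measurable

variable {X : Type*} [MeasurableSpace X] {μ : Measure X} {T : Equiv.Perm X} {f : X → ℝ}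

lemma measurable_zpow_s14 (hT : Measurable T) (hT' : Measurable T.symm) (k : ℤ) :
    Measurable ⇑(T ^ k) := by
  induction k using Int.induction_on with
  | zero => exact measurable_id
  | succ k ih => rw [zpow_add_one, coe_mul]; exact ih.comp hT
  | pred k ih => rw [zpow_sub_one, coe_mul]; exact ih.comp hT'

lemma measurePreserving_zpow (hT : MeasurePreserving T μ μ) (hT' : Measurable T.symm) (k : ℤ) :
    MeasurePreserving ⇑(T ^ k) μ μ := by
  have hT'' : MeasurePreserving T.symm μ μ := hT.symm ⟨T, hT.measurable, hT'⟩
  induction k using Int.induction_on with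
  | zero => exact .id μ
  | succ k ih => rw [zpow_add_one, coe_mul]; exact ih.comp hT
  | pred k ih => rw [zpow_sub_one, coe_mul]; exact ih.comp hT''

lemma measurable_birkhoffSumZ (hT : Measurable T) (hT' : Measurable T.symm) (hf : Measurable f)
    (n : ℤ) : Measurable (T.birkhoffSumZ f n) :=
  have hfT (i : ℤ) : Measurable fun x => f ((T ^ i) x) := hf.comp (measurable_zpow_s14 hT hT' i)
  (Finset.measurable_sum _ fun i _ => hfT i).sub (Finset.measurable_sum _ fun i _ => hfT i)

lemma measurableSet_reflectionSet (hT : Measurable T) (hT' : Measurable T.symm)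
    (hf : Measurable f) (C : ℝ) : MeasurableSet (T.reflectionSet f C) := by
  have hΦ := measurable_birkhoffSumZ hT hT' hf
  simp only [reflectionSet, Set.ofPred_forall]
  exact .iInter fun a => measurableSet_le ((hΦ a).sub (hΦ (1 - a))).abs measurable_const

lemma exists_measure_reflectionSet_ne_zero
    (hpos : 0 < μ {x | BddAbove (Set.range fun n : ℕ =>
      |∑ i ∈ Finset.Icc (-(n : ℤ)) (n : ℤ), f ((T ^ i) x)|)}) :
    ∃ C : ℝ, μ (T.reflectionSet f C) ≠ 0 := by
  by_contra! h
  refine hpos.ne' (measure_mono_null ?_ (measure_iUnion_null fun C : ℕ => h C))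
  rintro x ⟨B, hB⟩
  obtain ⟨C, hC⟩ := exists_nat_ge B
  refine Set.mem_iUnion.2 ⟨C, abs_sub_one_sub_le_of_forall_nat fun n => ?_⟩
  rw [← sum_Icc_neg_eq_birkhoffSumZ_sub]
  exact (hB ⟨n, rfl⟩).trans hC

lemma measurable_birkhoffOscillation (hT : Measurable T) (hT' : Measurable T.symm)
    (hf : Measurable f) : Measurable (T.birkhoffOscillation f) :=
  have hΦ := measurable_birkhoffSumZ hT hT' hf
  .iSup fun m => .iSup fun n => (hΦ m).sub (hΦ n)

def returnTimes (μ : Measure X) (T : Equiv.Perm X) (A : Set X) : Set ℤ :=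
  {s | μ (A ∩ (T ^ s) ⁻¹' A) ≠ 0}

end Measurable

end Equiv.Perm

open Equiv.Perm

namespace Ergodic

variable {X : Type*} [MeasurableSpace X] {μ : Measure X} {T : Equiv.Perm X} {f : X → ℝ}

lemma ae_exists_zpow_apply_mem (hT : Ergodic T μ) (hT' : Measurable T.symm) {s : Set X}
    (hs : MeasurableSet s) (h : μ s ≠ 0) : ∀ᵐ x ∂μ, ∃ k : ℤ, (T ^ k) x ∈ s := by
  have hU : MeasurableSet (⋃ k : ℤ, (T ^ k) ⁻¹' s) :=
    .iUnion fun k => measurable_zpow_s14 hT.measurable hT' k hs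
  have hsU : s ⊆ ⋃ k : ℤ, (T ^ k) ⁻¹' s := fun x hx => Set.mem_iUnion.2 ⟨0, hx⟩
  rcases hT.measure_self_or_compl_eq_zero hU (preimage_iUnion_zpow_preimage T s) with h0 | h0
  · exact absurd (measure_mono_null hsU h0) h
  · simpa using measure_eq_zero_iff_ae_notMem.1 h0

lemma measure_iUnion_zpow_preimage_eq_one [IsProbabilityMeasure μ] (hT : Ergodic T μ)
    (hT' : Measurable T.symm) {s : Set X} (hs : MeasurableSet s) (h : μ s ≠ 0) :
    μ (⋃ k : ℤ, (T ^ k) ⁻¹' s) = 1 := by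
  have hU : MeasurableSet (⋃ k : ℤ, (T ^ k) ⁻¹' s) :=
    .iUnion fun k => measurable_zpow_s14 hT.measurable hT' k hs
  rw [← measure_univ (μ := μ)]
  refine (ae_iff_measure_eq (p := (· ∈ ⋃ k : ℤ, (T ^ k) ⁻¹' s)) hU.nullMeasurableSet).1 ?_
  simpa using hT.ae_exists_zpow_apply_mem hT' hs h

/-- Finitely many translates `T^{-j} A`, `|j| ≤ N`, already cover more than `1 - μ A`, so every
translate of their union meets `A` in positive measure. -/
lemma exists_returnTimes_near [IsProbabilityMeasure μ] (hT : Ergodic T μ)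
    (hT' : Measurable T.symm) {A : Set X} (hA : MeasurableSet A) (h : μ A ≠ 0) :
    ∃ N : ℕ, ∀ t : ℤ, ∃ s ∈ returnTimes μ T A, |s - t| ≤ N := by
  set V : ℕ → Set X := fun n => ⋃ j ∈ Set.Icc (-(n : ℤ)) n, (T ^ j) ⁻¹' A
  have hVmeas (n : ℕ) : MeasurableSet (V n) :=
    .biUnion (Set.to_countable _) fun j _ => measurable_zpow_s14 hT.measurable hT' j hA
  have hVmono : Monotone V := fun m n hmn =>
    Set.biUnion_subset_biUnion_left (Set.Icc_subset_Icc (by omega) (by omega))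
  have hVU : ⋃ n, V n = ⋃ k : ℤ, (T ^ k) ⁻¹' A := by
    ext x
    simp only [V, Set.mem_iUnion, Set.mem_Icc, exists_prop]
    exact ⟨fun ⟨_, k, _, hk⟩ => ⟨k, hk⟩,
      fun ⟨k, hk⟩ => ⟨k.natAbs, k, by omega, hk⟩⟩
  have hlim : Tendsto (μ ∘ V) atTop (𝓝 1) :=
    hT.measure_iUnion_zpow_preimage_eq_one hT' hA h ▸ hVU ▸
      tendsto_measure_iUnion_atTop hVmono
  obtain ⟨N, hN⟩ := (hlim.eventually (lt_mem_nhds (ENNReal.sub_lt_self ENNReal.one_ne_top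
    one_ne_zero h))).exists
  refine ⟨N, fun t => ?_⟩
  have hW : MeasurableSet ((T ^ t) ⁻¹' V N) := measurable_zpow_s14 hT.measurable hT' t (hVmeas N)
  have hAW : μ (A ∩ (T ^ t) ⁻¹' V N) ≠ 0 := by
    intro h0
    have hunion := measure_union_add_inter (μ := μ) A hW
    rw [h0, add_zero, (measurePreserving_zpow hT.toMeasurePreserving hT' t).measure_preimage
      (hVmeas N).nullMeasurableSet] at hunion
    have := (ENNReal.sub_lt_iff_lt_left (measure_ne_top μ A) prob_le_one).1 hN
    exact (hunion ▸ prob_le_one).not_gt this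
  have hAW' : A ∩ (T ^ t) ⁻¹' V N =
      ⋃ j ∈ Set.Icc (-(N : ℤ)) N, A ∩ (T ^ (j + t)) ⁻¹' A := by
    simp only [V, Set.preimage_iUnion, Set.inter_iUnion₂, zpow_add, coe_mul,
      Set.preimage_comp]
  rw [hAW', Ne, measure_biUnion_null_iff (Set.to_countable _)] at hAW
  obtain ⟨j, hj, hjA⟩ := not_forall₂.1 hAW
  exact ⟨j + t, hjA, by rw [add_sub_cancel_right, abs_le]; exact hj⟩

lemma ae_abs_birkhoffSumZ_sub_add_two_mul_le (hT : Ergodic T μ) (hT' : Measurable T.symm)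
    (hf : Measurable f) {C : ℝ} {s : ℤ} (hs : s ∈ returnTimes μ T (T.reflectionSet f C)) :
    ∀ᵐ x ∂μ, ∀ a, |T.birkhoffSumZ f a x - T.birkhoffSumZ f (a + 2 * s) x| ≤ 2 * C := by
  have hA := measurableSet_reflectionSet hT.measurable hT' hf C
  filter_upwards [hT.ae_exists_zpow_apply_mem hT'
    (hA.inter (measurable_zpow_s14 hT.measurable hT' s hA)) hs] with x ⟨k, hk, hks⟩ a
  rw [Set.mem_preimage, ← mul_apply, ← zpow_add] at hks
  have h := abs_sub_add_two_mul_sub_le (u := fun a => T.birkhoffSumZ f a x)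
    (abs_birkhoffSumZ_sub_le_of_zpow_apply_mem_reflectionSet hk)
    (abs_birkhoffSumZ_sub_le_of_zpow_apply_mem_reflectionSet hks) a
  rwa [add_sub_cancel_right] at h

lemma ae_exists_forall_abs_birkhoffSumZ_le [IsProbabilityMeasure μ] (hT : Ergodic T μ)
    (hT' : Measurable T.symm) (hf : Measurable f)
    (hpos : 0 < μ {x | BddAbove (Set.range fun n : ℕ =>
      |∑ i ∈ Finset.Icc (-(n : ℤ)) (n : ℤ), f ((T ^ i) x)|)}) :
    ∀ᵐ x ∂μ, ∃ B, ∀ a, |T.birkhoffSumZ f a x| ≤ B := by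
  obtain ⟨C, hC⟩ := exists_measure_reflectionSet_ne_zero hpos
  obtain ⟨N, hN⟩ := hT.exists_returnTimes_near hT'
    (measurableSet_reflectionSet hT.measurable hT' hf C) hC
  have hshift := (ae_ball_iff (Set.to_countable (returnTimes μ T (T.reflectionSet f C)))).2
    fun s hs => hT.ae_abs_birkhoffSumZ_sub_add_two_mul_le hT' hf hs
  filter_upwards [hshift] with x hx
  refine exists_forall_abs_le_of_syndetic_shifts (N := 2 * N + 1) (c := 2 * C) fun t => ?_
  obtain ⟨s, hs, hst⟩ := hN (t / 2)
  refine ⟨2 * s, ?_, hx s hs⟩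
  rw [abs_le] at hst ⊢
  push_cast
  omega

/-- `0 = Φ 0 x ≤ sup Φ · x ≤ birkhoffOscillation T f x`, and the oscillation is
`T`-invariant, hence almost everywhere constant. -/
lemma exists_ae_abs_iSup_birkhoffSumZ_le (hT : Ergodic T μ) (hT' : Measurable T.symm)
    (hf : Measurable f) (hbdd : ∀ᵐ x ∂μ, ∃ B, ∀ a, |T.birkhoffSumZ f a x| ≤ B) :
    ∃ c, ∀ᵐ x ∂μ, |⨆ m, T.birkhoffSumZ f m x| ≤ c := by
  obtain ⟨c, hc⟩ := hT.toPreErgodic.ae_eq_const_of_ae_eq_comp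
    (measurable_birkhoffOscillation hT.measurable hT' hf) (funext birkhoffOscillation_apply)
  refine ⟨c, ?_⟩
  filter_upwards [hbdd, hc] with x ⟨B, hB⟩ hx
  have h0 : 0 ≤ ⨆ m, T.birkhoffSumZ f m x := by
    simpa using le_ciSup (bddAbove_range_of_abs_le hB) 0
  have hc' : ⨆ m, T.birkhoffSumZ f m x ≤ c :=
    (iSup_birkhoffSumZ_le_birkhoffOscillation hB).trans hx.le
  exact abs_le.2 ⟨by linarith, hc'⟩

end Ergodic

lemma exists_bounded_measurable_of_ae_abs_le {X : Type*} [MeasurableSpace X] {μ : Measure X}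
    {T : X → X} {f : X → ℝ} (hT : Measure.QuasiMeasurePreserving T μ μ)
    {g : X → ℝ} (hg : Measurable g) {M : ℝ} (hM : ∀ᵐ x ∂μ, |g x| ≤ M)
    (hfg : ∀ᵐ x ∂μ, f x = g x - g (T x)) :
    ∃ g' : X → ℝ, Measurable g' ∧ (∃ C : ℝ, ∀ x, |g' x| ≤ C) ∧
      ∀ᵐ x ∂μ, f x = g' x - g' (T x) := by
  have hclamp {y : ℝ} (hy : |y| ≤ M) : max (-|M|) (min |M| y) = y := by
    rw [abs_le] at hy
    rw [min_eq_right (hy.2.trans (le_abs_self M)), max_eq_right (by linarith [le_abs_self M])]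
  refine ⟨fun x => max (-|M|) (min |M| (g x)), by fun_prop, ⟨|M|, fun x => abs_le.2
    ⟨le_max_left _ _, max_le (by linarith [abs_nonneg M]) (min_le_left _ _)⟩⟩, ?_⟩
  filter_upwards [hfg, hM, hT.ae hM] with x hx h₁ h₂
  simpa only [hclamp h₁, hclamp h₂] using hx

theorem proposition4_bounded_bilateral_sums_implies_bounded_coboundary_general
    {X : Type*} [MeasurableSpace X] (μ : Measure X) [IsProbabilityMeasure μ]
    (T : Equiv.Perm X) (hTmeas' : Measurable (⇑T.symm))
    (hT : Ergodic (⇑T) μ)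
    (f : X → ℝ) (hf : Measurable f)
    (hpos : 0 < μ {x | BddAbove (Set.range fun n : ℕ =>
      |∑ i ∈ Finset.Icc (-(n : ℤ)) (n : ℤ), f ((T ^ i) x)|)}) :
    ∃ g : X → ℝ, Measurable g ∧ (∃ C : ℝ, ∀ x, |g x| ≤ C) ∧
      ∀ᵐ x ∂μ, f x = g x - g (T x) := by
  have hbdd := hT.ae_exists_forall_abs_birkhoffSumZ_le hTmeas' hf hpos
  obtain ⟨c, hc⟩ := hT.exists_ae_abs_iSup_birkhoffSumZ_le hTmeas' hf hbdd
  refine exists_bounded_measurable_of_ae_abs_le hT.quasiMeasurePreserving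
    (.iSup (measurable_birkhoffSumZ hT.measurable hTmeas' hf)) hc ?_
  filter_upwards [hbdd] with x ⟨B, hB⟩
  rw [iSup_birkhoffSumZ_apply_eq_sub x (bddAbove_range_of_abs_le hB)]
  ring

/-- **Proposition 4.** Let `f` be a finite measurable function on an ergodic
invertible probability-preserving system `(X, μ, T)`. If
`sup_{n≥0} |∑_{i=-n}^n f ∘ T^i| < +∞` almost everywhere on a set of positive
measure, then there exists a bounded measurable function `g` such that
`f = g - g ∘ T` almost everywhere. -/
theorem proposition4_bounded_bilateral_sums_implies_bounded_coboundary
    {X : Type*} [MeasurableSpace X] (μ : Measure X) [IsProbabilityMeasure μ]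
    (T : Equiv.Perm X) (hTmeas : Measurable (⇑T)) (hTmeas' : Measurable (⇑T.symm))
    (hT : Ergodic (⇑T) μ)
    (f : X → ℝ) (hf : Measurable f)
    (hpos : 0 < μ {x | BddAbove (Set.range fun n : ℕ =>
      |∑ i ∈ Finset.Icc (-(n : ℤ)) (n : ℤ), f ((T ^ i) x)|)}) :
    ∃ g : X → ℝ, Measurable g ∧ (∃ C : ℝ, ∀ x, |g x| ≤ C) ∧
      ∀ᵐ x ∂μ, f x = g x - g (T x) :=
  proposition4_bounded_bilateral_sums_implies_bounded_coboundary_general μ T hTmeas' hT f hf hpos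
end

section
/- Let f be a measurable function on an ergodic invertible dynamical system (X, 𝒳, μ, T). The set of points x for which the strict inequality f(T^{-n}x) < f(T^n x) holds for all n large enough is negligible, that is, μ[⋃_{N>0} ⋂_{n>N} {x : f(T^{-n}x) < f(T^n x)}] = 0. -/
/-!
The bad set is covered by the countably many sets `Y N q` of points `x` with
`f (T⁻ᵐ x) < f (Tᵐ x)` for all `m > N` and `f (T^{-(N+1)} x) < q < f (T^{N+1} x)`, `q ∈ ℚ`.
If an orbit visited `Y N q` at three times `a, a + t, a + 2t` with `t ≥ 2N + 2`, then at
`y = T^{a+t} x` and `m = t - (N + 1) > N` we would get `q < f (T⁻ᵐ y) < f (Tᵐ y) < q`.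
On the other hand, multiple recurrence along such progressions holds for every set `Y` of positive
measure: averaging the visit counts over `μ`, some point visits `Y` at least `L μ(Y)` times before
time `L = K M`, while by Roth's theorem a set of times with no three-term progression of step a
positive multiple of `K` has at most `K r(M) = o(M)` elements below `K M`, one Roth-bounded set per
residue class mod `K`.
-/

open MeasureTheory Filter Finset
open scoped ENNReal

theorem threeAPFree_of_forall_lt {s : Set ℕ}
    (h : ∀ a d, 0 < d → a ∈ s → a + d ∈ s → a + 2 * d ∉ s) : ThreeAPFree s := by
  intro a ha b hb c hc habc
  by_contra hab
  rcases Nat.lt_or_gt_of_ne hab with hlt | hgt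
  · exact h a (b - a) (by omega) ha (by rwa [Nat.add_sub_cancel' hlt.le])
      (by rwa [show a + 2 * (b - a) = c by omega])
  · exact h c (b - c) (by omega) hc (by rwa [show c + (b - c) = b by omega])
      (by rwa [show c + 2 * (b - c) = a by omega])

theorem card_filter_range_mul_le_mul_rothNumberNat {p : ℕ → Prop} [DecidablePred p] (K M : ℕ)
    (hp : ∀ a s, 0 < s → p a → p (a + K * s) → ¬ p (a + 2 * (K * s))) :
    #{v ∈ range (K * M) | p v} ≤ K * rothNumberNat M := by
  set B : ℕ → Finset ℕ := fun r => {j ∈ range M | p (K * j + r)}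
  have hcover :
      {v ∈ range (K * M) | p v} ⊆ (range K).biUnion fun r => (B r).image (K * · + r) := by
    intro v hv
    obtain ⟨hvKM, hpv⟩ := mem_filter.1 hv
    have hK : 0 < K := Nat.pos_of_mul_pos_right (Nat.zero_lt_of_lt (mem_range.1 hvKM))
    have hdiv := Nat.div_add_mod v K
    refine mem_biUnion.2 ⟨v % K, mem_range.2 (Nat.mod_lt v hK), mem_image.2 ⟨v / K, ?_, hdiv⟩⟩
    refine mem_filter.2 ⟨mem_range.2 ?_, by rwa [hdiv]⟩
    exact Nat.div_lt_of_lt_mul (mem_range.1 hvKM)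
  have hB : ∀ r, #(B r) ≤ rothNumberNat M := by
    intro r
    refine ThreeAPFree.le_rothNumberNat _ ?_ (fun j hj => mem_range.1 (mem_filter.1 hj).1) rfl
    refine threeAPFree_of_forall_lt fun a s hs ha has ha2s => hp (K * a + r) s hs ?_ ?_ ?_
    · exact (mem_filter.1 ha).2
    · convert (mem_filter.1 has).2 using 1; ring
    · convert (mem_filter.1 ha2s).2 using 1; ring
  calc #{v ∈ range (K * M) | p v}
      ≤ ∑ r ∈ range K, #((B r).image (K * · + r)) := (card_le_card hcover).trans card_biUnion_le
    _ ≤ ∑ _r ∈ range K, rothNumberNat M := sum_le_sum fun r _ => card_image_le.trans (hB r)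
    _ = K * rothNumberNat M := by rw [sum_const, card_range, smul_eq_mul]

theorem exists_rothNumberNat_lt_mul {c : ℝ} (hc : 0 < c) :
    ∃ M : ℕ, (rothNumberNat M : ℝ) < c * M := by
  obtain ⟨M, hM, hM1⟩ :=
    ((rothNumberNat_isLittleO_id.def (half_pos hc)).and (eventually_ge_atTop 1)).exists
  refine ⟨M, ?_⟩
  rw [Real.norm_natCast, Real.norm_natCast] at hM
  have : (0 : ℝ) < M := by exact_mod_cast hM1
  nlinarith

namespace MeasureTheory.MeasurePreserving

variable {X : Type*} [MeasurableSpace X] {μ : Measure X} [IsProbabilityMeasure μ] {T : X → X}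
  {Y : Set X}

open Classical in
theorem exists_mul_measure_le_card_filter_iterate_mem (hT : MeasurePreserving T μ μ)
    (hY : MeasurableSet Y) (L : ℕ) :
    ∃ x, L * μ Y ≤ #{j ∈ range L | T^[j] x ∈ Y} := by
  have hcard : ∀ x, (#{j ∈ range L | T^[j] x ∈ Y} : ℝ≥0∞) =
      ∑ j ∈ range L, (T^[j] ⁻¹' Y).indicator 1 x := by
    intro x
    rw [card_filter, Nat.cast_sum]
    exact sum_congr rfl fun j _ => by by_cases h : T^[j] x ∈ Y <;> simp [h]
  have hint : ∫⁻ x, (#{j ∈ range L | T^[j] x ∈ Y} : ℝ≥0∞) ∂μ = L * μ Y := by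
    simp_rw [hcard]
    rw [lintegral_finsetSum _ fun j _ => measurable_one.indicator ((hT.iterate j).measurable hY)]
    calc ∑ j ∈ range L, ∫⁻ x, (T^[j] ⁻¹' Y).indicator 1 x ∂μ
        = ∑ _j ∈ range L, μ Y := sum_congr rfl fun j _ => by
          rw [lintegral_indicator_one ((hT.iterate j).measurable hY),
            (hT.iterate j).measure_preimage hY.nullMeasurableSet]
      _ = L * μ Y := by rw [sum_const, card_range, nsmul_eq_mul]
  obtain ⟨x, hx⟩ :=
    exists_lintegral_le (μ := μ) (hint ▸ ENNReal.mul_ne_top (by simp) (measure_ne_top μ Y))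
  exact ⟨x, hint ▸ hx⟩

theorem exists_iterate_mem_threeAP (hT : MeasurePreserving T μ μ) (hY : MeasurableSet Y)
    (hY₀ : μ Y ≠ 0) (K : ℕ) :
    ∃ x a t, K ≤ t ∧ T^[a] x ∈ Y ∧ T^[a + t] x ∈ Y ∧ T^[a + 2 * t] x ∈ Y := by
  classical
  by_contra! h
  obtain ⟨M, hM⟩ := exists_rothNumberNat_lt_mul (ENNReal.toReal_pos hY₀ (measure_ne_top μ Y))
  obtain ⟨x, hx⟩ := hT.exists_mul_measure_le_card_filter_iterate_mem hY ((K + 1) * M)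
  have hroth := card_filter_range_mul_le_mul_rothNumberNat (p := fun j => T^[j] x ∈ Y) (K + 1) M
    fun a s hs ha has ha2s => h x a _ (by nlinarith) ha has ha2s
  have hle : (((K + 1) * M : ℕ) : ℝ) * (μ Y).toReal ≤ ((K + 1) * rothNumberNat M : ℕ) := by
    have := ENNReal.toReal_mono (ENNReal.natCast_ne_top _) (hx.trans (Nat.cast_le.2 hroth))
    simpa only [ENNReal.toReal_mul, ENNReal.toReal_natCast] using this
  push_cast at hle
  nlinarith

end MeasureTheory.MeasurePreserving

theorem theorem5_no_ultimate_strict_inequality_general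
    {X : Type*} [MeasurableSpace X] (μ : Measure X) [IsProbabilityMeasure μ]
    (T : Equiv.Perm X) (hTmeas' : Measurable (⇑T.symm))
    (hT : Ergodic (⇑T) μ)
    (f : X → ℝ) (hf : Measurable f) :
    μ {x | ∃ N : ℕ, ∀ n > N, f ((T⁻¹ ^ n) x) < f ((T ^ n) x)} = 0 := by
  set Y : ℕ → ℚ → Set X := fun N q => {x | (∀ m > N, f ((T⁻¹ ^ m) x) < f ((T ^ m) x)) ∧
    f ((T⁻¹ ^ (N + 1)) x) < q ∧ q < f ((T ^ (N + 1)) x)}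
  have hcover : {x | ∃ N : ℕ, ∀ n > N, f ((T⁻¹ ^ n) x) < f ((T ^ n) x)} ⊆ ⋃ N, ⋃ q, Y N q := by
    rintro x ⟨N, hN⟩
    obtain ⟨q, hq₁, hq₂⟩ := exists_rat_btwn (hN (N + 1) N.lt_succ_self)
    exact Set.mem_iUnion₂.2 ⟨N, q, hN, hq₁, hq₂⟩
  refine measure_mono_null hcover (measure_iUnion_null fun N => measure_iUnion_null fun q => ?_)
  have hpow : ∀ m, Measurable ⇑(T ^ m) := hT.measurable.iterate
  have hpow' : ∀ m, Measurable ⇑(T⁻¹ ^ m) := hTmeas'.iterate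
  have hlt : ∀ {g h : X → ℝ}, Measurable g → Measurable h → Measurable fun x => g x < h x :=
    fun hg hh => measurableSet_setOfPred.1 (measurableSet_lt hg hh)
  have hY : MeasurableSet (Y N q) := Measurable.setOf <|
    .and (.forall fun m => .forall fun _ => hlt (hf.comp (hpow' m)) (hf.comp (hpow m)))
      (.and (hlt (hf.comp (hpow' _)) measurable_const) (hlt measurable_const (hf.comp (hpow _))))
  by_contra hY₀
  obtain ⟨x, a, t, ht, h₀, h₁, h₂⟩ :=
    hT.toMeasurePreserving.exists_iterate_mem_threeAP hY hY₀ (2 * N + 2)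
  simp only [← Equiv.Perm.coe_pow] at h₀ h₁ h₂
  obtain ⟨m, rfl⟩ : ∃ m, t = N + 1 + m := Nat.exists_eq_add_of_le (by omega)
  have key := h₁.1 m (by omega)
  rw [← Equiv.Perm.mul_apply, ← Equiv.Perm.mul_apply,
    show T⁻¹ ^ m * T ^ (a + (N + 1 + m)) = T ^ (N + 1) * T ^ a by group,
    show T ^ m * T ^ (a + (N + 1 + m)) = T⁻¹ ^ (N + 1) * T ^ (a + 2 * (N + 1 + m)) by group,
    Equiv.Perm.mul_apply, Equiv.Perm.mul_apply] at key
  linarith [h₀.2.2, h₂.2.1]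

/-- **Theorem 5.** Let `f` be a measurable function on an ergodic invertible
probability-preserving system `(X, μ, T)`. The set of points `x` for which the
strict inequality `f(T^{-n} x) < f(T^n x)` holds for all `n` large enough is
negligible: `μ (⋃_{N>0} ⋂_{n>N} {f ∘ T^{-n} < f ∘ T^n}) = 0`. -/
theorem theorem5_no_ultimate_strict_inequality
    {X : Type*} [MeasurableSpace X] (μ : Measure X) [IsProbabilityMeasure μ]
    (T : Equiv.Perm X) (hTmeas : Measurable (⇑T)) (hTmeas' : Measurable (⇑T.symm))
    (hT : Ergodic (⇑T) μ)
    (f : X → ℝ) (hf : Measurable f) :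
    μ {x | ∃ N : ℕ, ∀ n > N, f ((T⁻¹ ^ n) x) < f ((T ^ n) x)} = 0 :=
  theorem5_no_ultimate_strict_inequality_general μ T hTmeas' hT f hf
end

section
/- Let f be a finite measurable function on (X, 𝒳, μ, T). If F := sup_{n>0} ∑_{i=0}^{n-1} f∘T^i < +∞ μ-almost everywhere, then the filling scheme equation f = −F^− + F^+ − F^+∘T holds μ-almost everywhere, where F^+ = max(F, 0) and F^− = max(−F, 0). -/
/-!
Writing `Sₙ x = ∑_{i<n} f (Tⁱ x)`, the cocycle identity `S_{n+1} x = f x + Sₙ (T x)` together with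
`S₀ = 0` gives, wherever the partial sums are bounded above, the pointwise identity
`F x = f x + max (F (T x)) 0`. The filling scheme equation is this identity combined with
`F = F⁺ - F⁻`.
-/

open MeasureTheory

theorem ciSup_nat_eq_sup_ciSup_succ {α : Type*} [ConditionallyCompleteLattice α] {u : ℕ → α}
    (hu : BddAbove (Set.range u)) : ⨆ i, u i = u 0 ⊔ ⨆ i, u (i + 1) := by
  have hu_succ : BddAbove (Set.range fun i => u (i + 1)) :=
    hu.mono (Set.range_comp_subset_range _ u)
  refine le_antisymm (ciSup_le fun i => ?_)
    (sup_le (le_ciSup hu 0) (ciSup_le fun i => le_ciSup hu _))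
  cases i with
  | zero => exact le_sup_left
  | succ i => exact le_sup_of_le_right (le_ciSup hu_succ i)

theorem ciSup_birkhoffSum_succ_eq {α : Type*} (φ : α → α) (g : α → ℝ) {x : α}
    (hx : BddAbove (Set.range fun n => birkhoffSum φ g (n + 1) x)) :
    ⨆ n, birkhoffSum φ g (n + 1) x = g x + max (⨆ n, birkhoffSum φ g (n + 1) (φ x)) 0 := by
  simp only [birkhoffSum_succ' φ g _ x] at hx ⊢
  have hbdd : BddAbove (Set.range fun n => birkhoffSum φ g n (φ x)) := by
    obtain ⟨c, hc⟩ := hx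
    refine ⟨c - g x, ?_⟩
    rintro _ ⟨n, rfl⟩
    linarith [hc ⟨n, rfl⟩]
  rw [← add_ciSup hbdd, ciSup_nat_eq_sup_ciSup_succ hbdd, birkhoffSum_zero, sup_comm]

theorem proposition0_filling_scheme_equation_general
    {X : Type*} [MeasurableSpace X] (μ : Measure X)
    (T : Equiv.Perm X)
    (f : X → ℝ)
    (hbdd : ∀ᵐ x ∂μ, BddAbove (Set.range fun n : ℕ =>
      ∑ i ∈ Finset.range (n + 1), f ((T ^ i) x)))
    (F : X → ℝ)
    (hF : ∀ x, F x = ⨆ n : ℕ, ∑ i ∈ Finset.range (n + 1), f ((T ^ i) x)) :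
    ∀ᵐ x ∂μ,
      f x = -(max (-(F x)) 0) + max (F x) 0 - max (F (T x)) 0 := by
  filter_upwards [hbdd] with x hx
  have hF_birkhoff : ∀ y, F y = ⨆ n, birkhoffSum T f (n + 1) y := hF
  have hF_step : F x = f x + max (F (T x)) 0 := by
    rw [hF_birkhoff, hF_birkhoff]
    exact ciSup_birkhoffSum_succ_eq T f hx
  have hF_parts : max (F x) 0 - max (-F x) 0 = F x := posPart_sub_negPart (F x)
  linarith

/-- **Proposition 0 (filling scheme equation).** Let `f` be a finite measurable
function on an ergodic invertible probability-preserving system `(X, μ, T)`.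
If `F = sup_{n>0} ∑_{i=0}^{n-1} f ∘ T^i < ∞` almost everywhere, then
`f = -F⁻ + F⁺ - F⁺ ∘ T` almost everywhere, where `F⁺ = max(F, 0)` and
`F⁻ = max(-F, 0)`. -/
theorem proposition0_filling_scheme_equation
    {X : Type*} [MeasurableSpace X] (μ : Measure X) [IsProbabilityMeasure μ]
    (T : Equiv.Perm X) (hTmeas : Measurable (⇑T)) (hTmeas' : Measurable (⇑T.symm))
    (hT : Ergodic (⇑T) μ)
    (f : X → ℝ) (hf : Measurable f)
    (hbdd : ∀ᵐ x ∂μ, BddAbove (Set.range fun n : ℕ =>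
      ∑ i ∈ Finset.range (n + 1), f ((T ^ i) x)))
    (F : X → ℝ)
    (hF : ∀ x, F x = ⨆ n : ℕ, ∑ i ∈ Finset.range (n + 1), f ((T ^ i) x)) :
    ∀ᵐ x ∂μ,
      f x = -(max (-(F x)) 0) + max (F x) 0 - max (F (T x)) 0 :=
  proposition0_filling_scheme_equation_general μ T f hbdd F hF
end
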